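/- arXiv:math/0506197 — 12 statements merged into one kernel-verified Lean document; each statement's English description precedes it below -/
import Mathlib

section
/- Let n ≥ 1, c > 0, and let R : ℝ → Sym(n) be continuous with xᵀR(t)x ≤ c·|x|² for every t ∈ ℝ and x ∈ ℝⁿ (all eigenvalues of R(t) do not exceed c). If τ₀ < τ₁ and e : [τ₀,τ₁] → ℝⁿ is a twice continuously differentiable solution of the structural (Jacobi) equation ë(t) + R(t)e(t) = 0 on [τ₀,τ₁], not identically zero, with e(τ₀) = 0 and e(τ₁) = 0, then τ₁ − τ₀ ≥ π/√c. Moreover, if xᵀR(t)x ≤ 0 for all t and x, then no such not-identically-zero solution vanishing at two distinct points exists. -/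
open Matrix Set Real

set_option maxHeartbeats 1000000 in
/-- **Comparison theorem, first part (ODE form).**
If `R : ℝ → Sym(n)` is continuous with `xᵀR(t)x ≤ c·|x|²` everywhere (`c > 0`), and
`e` is a C² solution of the structural equation `ë + R(t)e = 0` on `[τ₀, τ₁]`,
not identically zero, vanishing at both endpoints `τ₀ < τ₁`, then
`τ₁ - τ₀ ≥ π/√c`.  Moreover, if `xᵀR(t)x ≤ 0` for all `t, x`, no such solution exists. -/
theorem structural_equation_comparison
    (n : ℕ) (hn : 1 ≤ n) (c : ℝ) (hc : 0 < c)
    (R : ℝ → Matrix (Fin n) (Fin n) ℝ)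
    (hRsymm : ∀ t, (R t).IsSymm)
    (hRcont : ∀ i j, Continuous fun t => R t i j)
    (hRle : ∀ (t : ℝ) (x : Fin n → ℝ), x ⬝ᵥ (R t *ᵥ x) ≤ c * (x ⬝ᵥ x))
    (τ₀ τ₁ : ℝ) (hττ : τ₀ < τ₁)
    (e e' e'' : ℝ → Fin n → ℝ)
    (he : ∀ t ∈ Icc τ₀ τ₁, HasDerivWithinAt e (e' t) (Icc τ₀ τ₁) t)
    (he' : ∀ t ∈ Icc τ₀ τ₁, HasDerivWithinAt e' (e'' t) (Icc τ₀ τ₁) t)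
    (he''cont : ContinuousOn e'' (Icc τ₀ τ₁))
    (heq : ∀ t ∈ Icc τ₀ τ₁, e'' t + R t *ᵥ e t = 0)
    (hnz : ∃ t ∈ Icc τ₀ τ₁, e t ≠ 0)
    (h₀ : e τ₀ = 0) (h₁ : e τ₁ = 0) :
    π / Real.sqrt c ≤ τ₁ - τ₀ ∧
      ((∀ (t : ℝ) (x : Fin n → ℝ), x ⬝ᵥ (R t *ᵥ x) ≤ 0) → False) := by
  have hle : τ₀ ≤ τ₁ := hττ.le
  set L : ℝ := τ₁ - τ₀ with hLdef
  have hL : 0 < L := sub_pos.2 hττ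
  clear_value L
  -- continuity of e, e'
  have hecont : ContinuousOn e (Icc τ₀ τ₁) := fun t ht => (he t ht).continuousWithinAt
  have he'cont : ContinuousOn e' (Icc τ₀ τ₁) := fun t ht => (he' t ht).continuousWithinAt
  -- continuity of dot products
  have hdotcont : ∀ (f g : ℝ → Fin n → ℝ), ContinuousOn f (Icc τ₀ τ₁) →
      ContinuousOn g (Icc τ₀ τ₁) → ContinuousOn (fun t => f t ⬝ᵥ g t) (Icc τ₀ τ₁) := by
    intro f g hf hg
    simp only [dotProduct]
    exact continuousOn_finset_sum _ fun i _ =>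
      ((continuous_apply i).comp_continuousOn hf).mul ((continuous_apply i).comp_continuousOn hg)
  -- integrability helper
  have hInt : ∀ (f : ℝ → ℝ), ContinuousOn f (Icc τ₀ τ₁) →
      IntervalIntegrable f MeasureTheory.volume τ₀ τ₁ := by
    intro f hf
    apply ContinuousOn.intervalIntegrable
    rwa [uIcc_of_le hle]
  -- FTC helper
  have hFTC : ∀ (f f' : ℝ → ℝ), (∀ t ∈ Icc τ₀ τ₁, HasDerivWithinAt f (f' t) (Icc τ₀ τ₁) t) →
      ContinuousOn f' (Icc τ₀ τ₁) → ∫ t in τ₀..τ₁, f' t = f τ₁ - f τ₀ := by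
    intro f f' hd hc'
    refine intervalIntegral.integral_eq_sub_of_hasDeriv_right_of_le hle
      (fun t ht => (hd t ht).continuousWithinAt) (fun t ht => ?_) (hInt f' hc')
    exact ((hd t (Ioo_subset_Icc_self ht)).hasDerivAt
      (Icc_mem_nhds ht.1 ht.2)).hasDerivWithinAt
  -- componentwise derivatives
  have hcomp : ∀ t ∈ Icc τ₀ τ₁, ∀ i, HasDerivWithinAt (fun s => e s i) (e' t i) (Icc τ₀ τ₁) t :=
    fun t ht i => hasDerivWithinAt_pi.1 (he t ht) i
  have hcomp' : ∀ t ∈ Icc τ₀ τ₁, ∀ i, HasDerivWithinAt (fun s => e' s i) (e'' t i) (Icc τ₀ τ₁) t :=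
    fun t ht i => hasDerivWithinAt_pi.1 (he' t ht) i
  set q : ℝ → ℝ := fun t => e t ⬝ᵥ e t with hqdef
  set p : ℝ → ℝ := fun t => e' t ⬝ᵥ e' t with hpdef
  have hqcont : ContinuousOn q (Icc τ₀ τ₁) := hdotcont e e hecont hecont
  have hpcont : ContinuousOn p (Icc τ₀ τ₁) := hdotcont e' e' he'cont he'cont
  have hq0 : q τ₀ = 0 := by simp [hqdef, h₀]
  have hq1 : q τ₁ = 0 := by simp [hqdef, h₁]
  -- derivative of q
  have hdq : ∀ t ∈ Icc τ₀ τ₁, HasDerivWithinAt q (2 * (e' t ⬝ᵥ e t)) (Icc τ₀ τ₁) t := by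
    intro t ht
    have : HasDerivWithinAt (fun s => ∑ i : Fin n, e s i * e s i)
        (∑ i : Fin n, (e' t i * e t i + e t i * e' t i)) (Icc τ₀ τ₁) t :=
      HasDerivWithinAt.fun_sum fun i _ => (hcomp t ht i).mul (hcomp t ht i)
    have h2 : (∑ i : Fin n, (e' t i * e t i + e t i * e' t i)) = 2 * (e' t ⬝ᵥ e t) := by
      simp only [dotProduct, Finset.sum_add_distrib, Finset.mul_sum, two_mul]
      congr 1
      exact Finset.sum_congr rfl fun i _ => mul_comm _ _
    rw [← h2]
    exact this
  -- derivative of e' ⬝ᵥ e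
  have hdF : ∀ t ∈ Icc τ₀ τ₁, HasDerivWithinAt (fun s => e' s ⬝ᵥ e s)
      (e'' t ⬝ᵥ e t + p t) (Icc τ₀ τ₁) t := by
    intro t ht
    have : HasDerivWithinAt (fun s => ∑ i : Fin n, e' s i * e s i)
        (∑ i : Fin n, (e'' t i * e t i + e' t i * e' t i)) (Icc τ₀ τ₁) t :=
      HasDerivWithinAt.fun_sum fun i _ => (hcomp' t ht i).mul (hcomp t ht i)
    have h2 : (∑ i : Fin n, (e'' t i * e t i + e' t i * e' t i))
        = e'' t ⬝ᵥ e t + p t := by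
      simp [hpdef, dotProduct, Finset.sum_add_distrib]
    rw [← h2]
    exact this
  -- continuity of R e and of e ⬝ᵥ R e
  have hRecont : ContinuousOn (fun t => R t *ᵥ e t) (Icc τ₀ τ₁) := by
    apply continuousOn_pi.2
    intro i
    simp only [mulVec, dotProduct]
    exact continuousOn_finset_sum _ fun j _ =>
      ((hRcont i j).continuousOn).mul ((continuous_apply j).comp_continuousOn hecont)
  have hrecont : ContinuousOn (fun t => e t ⬝ᵥ (R t *ᵥ e t)) (Icc τ₀ τ₁) :=
    hdotcont _ _ hecont hRecont
  -- Identity A : ∫ p = ∫ e ⬝ᵥ R e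
  have hA : ∫ t in τ₀..τ₁, p t = ∫ t in τ₀..τ₁, e t ⬝ᵥ (R t *ᵥ e t) := by
    have hcontF' : ContinuousOn (fun t => e'' t ⬝ᵥ e t + p t) (Icc τ₀ τ₁) :=
      (hdotcont e'' e he''cont hecont).add hpcont
    have h1 : ∫ t in τ₀..τ₁, (e'' t ⬝ᵥ e t + p t) = 0 := by
      rw [hFTC (fun s => e' s ⬝ᵥ e s) _ hdF hcontF']
      simp [h₀, h₁]
    have h2 : ∀ t ∈ Icc τ₀ τ₁, e'' t ⬝ᵥ e t + p t = p t - e t ⬝ᵥ (R t *ᵥ e t) := by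
      intro t ht
      have he'' : e'' t = -(R t *ᵥ e t) := by
        have := heq t ht
        rw [add_eq_zero_iff_eq_neg] at this
        exact this
      rw [he'', neg_dotProduct, dotProduct_comm]
      ring
    have h3 : ∫ t in τ₀..τ₁, (e'' t ⬝ᵥ e t + p t)
        = ∫ t in τ₀..τ₁, (p t - e t ⬝ᵥ (R t *ᵥ e t)) := by
      apply intervalIntegral.integral_congr
      intro t ht
      rw [uIcc_of_le hle] at ht
      exact h2 t ht
    rw [h3, intervalIntegral.integral_sub (hInt _ hpcont) (hInt _ hrecont)] at h1
    linarith
  -- positivity of ∫ q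
  have hqnonneg : ∀ t, 0 ≤ q t := by
    intro t
    exact Finset.sum_nonneg fun i _ => mul_self_nonneg _
  have hI₀pos : 0 < ∫ t in τ₀..τ₁, q t := by
    obtain ⟨t₀, ht₀, hnz₀⟩ := hnz
    have ht₀Ioo : t₀ ∈ Ioo τ₀ τ₁ := by
      rcases eq_or_lt_of_le ht₀.1 with h | h
      · exact absurd h₀ (by rwa [h])
      rcases eq_or_lt_of_le ht₀.2 with h' | h'
      · exact absurd h₁ (by rwa [← h'])
      exact ⟨h, h'⟩
    have hq₀pos : 0 < q t₀ := by
      rcases (hqnonneg t₀).lt_or_eq with h | h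
      · exact h
      exfalso
      apply hnz₀
      funext i
      have : ∑ i : Fin n, e t₀ i * e t₀ i = 0 := h.symm
      have hz := (Finset.sum_eq_zero_iff_of_nonneg
        (fun j _ => mul_self_nonneg (e t₀ j))).1 this i (Finset.mem_univ i)
      have := mul_self_eq_zero.1 hz
      simpa using this
    have hqat : ContinuousAt q t₀ :=
      (hqcont t₀ ht₀).continuousAt (Icc_mem_nhds ht₀Ioo.1 ht₀Ioo.2)
    have hev : ∀ᶠ t in nhds t₀, 0 < q t := hqat.eventually (eventually_gt_nhds hq₀pos)
    obtain ⟨ε, hε, hball⟩ := Metric.eventually_nhds_iff.1 hev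
    set a : ℝ := max τ₀ (t₀ - ε / 2) with hadef
    set b : ℝ := min τ₁ (t₀ + ε / 2) with hbdef
    have hat : a < t₀ := max_lt ht₀Ioo.1 (by linarith)
    have htb : t₀ < b := lt_min ht₀Ioo.2 (by linarith)
    have hab : a < b := hat.trans htb
    have hτa : τ₀ ≤ a := le_max_left _ _
    have hbτ : b ≤ τ₁ := min_le_left _ _
    have hsub : Icc a b ⊆ Icc τ₀ τ₁ := Icc_subset_Icc hτa hbτ
    have hqpos : ∀ t ∈ Icc a b, 0 < q t := by
      intro t ht
      apply hball
      rw [Real.dist_eq, abs_lt]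
      constructor
      · have : t₀ - ε / 2 ≤ a := le_max_right _ _
        have := this.trans ht.1
        linarith
      · have : b ≤ t₀ + ε / 2 := min_le_right _ _
        have := ht.2.trans this
        linarith
    have hintab : IntervalIntegrable q MeasureTheory.volume a b := by
      apply ContinuousOn.intervalIntegrable
      exact hqcont.mono (by rw [uIcc_of_le hab.le]; exact hsub)
    have hmid : 0 < ∫ t in a..b, q t :=
      intervalIntegral.intervalIntegral_pos_of_pos_on hintab
        (fun t ht => hqpos t (Ioo_subset_Icc_self ht)) hab
    have hi1 : IntervalIntegrable q MeasureTheory.volume τ₀ a := by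
      apply ContinuousOn.intervalIntegrable
      exact hqcont.mono (by rw [uIcc_of_le hτa]; exact Icc_subset_Icc le_rfl (hat.le.trans (htb.le.trans hbτ)))
    have hi2 : IntervalIntegrable q MeasureTheory.volume a b := hintab
    have hi3 : IntervalIntegrable q MeasureTheory.volume b τ₁ := by
      apply ContinuousOn.intervalIntegrable
      exact hqcont.mono (by rw [uIcc_of_le hbτ]; exact Icc_subset_Icc (hτa.trans hab.le) le_rfl)
    have hsplit : ∫ t in τ₀..τ₁, q t
        = (∫ t in τ₀..a, q t) + ((∫ t in a..b, q t) + ∫ t in b..τ₁, q t) := by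
      rw [intervalIntegral.integral_add_adjacent_intervals hi2 hi3,
        intervalIntegral.integral_add_adjacent_intervals hi1 (hi2.trans hi3)]
    have h1 : 0 ≤ ∫ t in τ₀..a, q t :=
      intervalIntegral.integral_nonneg hτa fun u _ => hqnonneg u
    have h3 : 0 ≤ ∫ t in b..τ₁, q t :=
      intervalIntegral.integral_nonneg hbτ fun u _ => hqnonneg u
    rw [hsplit]
    linarith
  -- bound on ∫ e ⬝ᵥ R e
  have hIRe : ∫ t in τ₀..τ₁, e t ⬝ᵥ (R t *ᵥ e t) ≤ c * ∫ t in τ₀..τ₁, q t := by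
    rw [← intervalIntegral.integral_const_mul]
    exact intervalIntegral.integral_mono_on hle (hInt _ hrecont)
      ((hInt _ hqcont).const_mul c) fun t _ => hRle t (e t)
  clear_value q p
  -- Wirtinger-type inequality
  have hWirt : ∀ μ : ℝ, 0 < μ → μ * L < π →
      μ ^ 2 * ∫ t in τ₀..τ₁, q t ≤ ∫ t in τ₀..τ₁, p t := by
    intro μ hμ hμL
    set δ : ℝ := (π - μ * L) / 2 with hδdef
    have hδ : 0 < δ := by simp [hδdef]; linarith
    clear_value δ
    set θ : ℝ → ℝ := fun t => μ * (t - τ₀) + δ with hθdef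
    have hspos : ∀ t ∈ Icc τ₀ τ₁, 0 < Real.sin (θ t) := by
      intro t ht
      have h1 : 0 ≤ μ * (t - τ₀) := mul_nonneg hμ.le (by linarith [ht.1])
      have h2 : μ * (t - τ₀) ≤ μ * L := by
        apply mul_le_mul_of_nonneg_left _ hμ.le
        simp only [hLdef]; linarith [ht.2]
      apply Real.sin_pos_of_pos_of_lt_pi
      · show 0 < μ * (t - τ₀) + δ
        linarith
      · show μ * (t - τ₀) + δ < π
        rw [hδdef]
        linarith
    set ψ : ℝ → ℝ := fun t => μ * (Real.cos (θ t) / Real.sin (θ t)) with hψdef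
    have hψd : ∀ t ∈ Icc τ₀ τ₁, HasDerivAt ψ (-μ ^ 2 - ψ t ^ 2) t := by
      intro t ht
      have hθd : HasDerivAt θ μ t := by
        have h1 : HasDerivAt (fun s : ℝ => s - τ₀) 1 t := (hasDerivAt_id t).sub_const τ₀
        have h2 := (h1.const_mul μ).add_const δ
        simpa [hθdef] using h2
      have hs0 : Real.sin (θ t) ≠ 0 := (hspos t ht).ne'
      have hcos : HasDerivAt (fun s => Real.cos (θ s)) (-Real.sin (θ t) * μ) t :=
        (Real.hasDerivAt_cos (θ t)).comp t hθd
      have hsin : HasDerivAt (fun s => Real.sin (θ s)) (Real.cos (θ t) * μ) t :=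
        (Real.hasDerivAt_sin (θ t)).comp t hθd
      have hdiv := (hcos.div hsin hs0).const_mul μ
      have key : -μ ^ 2 - ψ t ^ 2
          = μ * ((-Real.sin (θ t) * μ * Real.sin (θ t)
              - Real.cos (θ t) * (Real.cos (θ t) * μ)) / Real.sin (θ t) ^ 2) := by
        have hpyth := Real.sin_sq_add_cos_sq (θ t)
        simp only [hψdef]
        field_simp
      rw [key]
      exact hdiv
    have hψcont : ContinuousOn ψ (Icc τ₀ τ₁) := by
      apply ContinuousOn.mul continuousOn_const
      apply ContinuousOn.div
      · exact (Real.continuous_cos.comp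
          ((continuous_const.mul (continuous_id.sub continuous_const)).add continuous_const)).continuousOn
      · exact (Real.continuous_sin.comp
          ((continuous_const.mul (continuous_id.sub continuous_const)).add continuous_const)).continuousOn
      · exact fun t ht => (hspos t ht).ne'
    -- H = q * ψ
    set H' : ℝ → ℝ := fun t => 2 * (e' t ⬝ᵥ e t) * ψ t + q t * (-μ ^ 2 - ψ t ^ 2) with hH'def
    have hdH : ∀ t ∈ Icc τ₀ τ₁, HasDerivWithinAt (fun s => q s * ψ s) (H' t) (Icc τ₀ τ₁) t :=
      fun t ht => (hdq t ht).mul (hψd t ht).hasDerivWithinAt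
    have hH'cont : ContinuousOn H' (Icc τ₀ τ₁) := by
      apply ContinuousOn.add
      · exact (continuousOn_const.mul (hdotcont e' e he'cont hecont)).mul hψcont
      · exact hqcont.mul (continuousOn_const.sub (hψcont.pow 2))
    have hHint : ∫ t in τ₀..τ₁, H' t = 0 := by
      rw [hFTC (fun s => q s * ψ s) H' hdH hH'cont, hq0, hq1]
      ring
    -- pointwise nonnegativity of p - μ²q - H'
    have hGnonneg : ∀ t ∈ Icc τ₀ τ₁, 0 ≤ p t - μ ^ 2 * q t - H' t := by
      intro t ht
      have hkey : p t - μ ^ 2 * q t - H' t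
          = (e' t - ψ t • e t) ⬝ᵥ (e' t - ψ t • e t) := by
        simp only [sub_dotProduct, dotProduct_sub, smul_dotProduct, dotProduct_smul,
          smul_eq_mul, hH'def, hpdef, hqdef]
        rw [dotProduct_comm (e t) (e' t)]
        ring
      rw [hkey]
      exact Finset.sum_nonneg fun i _ => mul_self_nonneg _
    have h0le : 0 ≤ ∫ t in τ₀..τ₁, (p t - μ ^ 2 * q t - H' t) :=
      intervalIntegral.integral_nonneg hle hGnonneg
    have hsplit : ∫ t in τ₀..τ₁, (p t - μ ^ 2 * q t - H' t)
        = (∫ t in τ₀..τ₁, p t) - μ ^ 2 * (∫ t in τ₀..τ₁, q t) - ∫ t in τ₀..τ₁, H' t := by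
      rw [intervalIntegral.integral_sub (((hInt _ hpcont).sub
        ((hInt _ hqcont).const_mul (μ ^ 2)))) (hInt _ hH'cont),
        intervalIntegral.integral_sub (hInt _ hpcont) ((hInt _ hqcont).const_mul (μ ^ 2)),
        intervalIntegral.integral_const_mul]
    rw [hsplit, hHint] at h0le
    linarith
  constructor
  · by_contra h
    push_neg at h
    have hsc : 0 < Real.sqrt c := Real.sqrt_pos.2 hc
    have hπL : Real.sqrt c < π / L := by
      rw [lt_div_iff₀ hL]
      calc Real.sqrt c * L < Real.sqrt c * (π / Real.sqrt c) := by
            apply mul_lt_mul_of_pos_left _ hsc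
            exact h
        _ = π := by field_simp
    set μ : ℝ := (Real.sqrt c + π / L) / 2 with hμdef
    clear_value μ
    have hμpos : 0 < μ := by
      have : 0 < π / L := div_pos Real.pi_pos hL
      simp only [hμdef]; linarith
    have hμlt : μ < π / L := by simp only [hμdef]; linarith
    have hμL : μ * L < π := by
      calc μ * L < (π / L) * L := mul_lt_mul_of_pos_right hμlt hL
        _ = π := by field_simp
    have hcμ : c < μ ^ 2 := by
      have h1 : Real.sqrt c < μ := by simp only [hμdef]; linarith
      calc c = Real.sqrt c ^ 2 := (Real.sq_sqrt hc.le).symm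
        _ < μ ^ 2 := by nlinarith
    have := hWirt μ hμpos hμL
    rw [hA] at this
    have hfin : μ ^ 2 * ∫ t in τ₀..τ₁, q t ≤ c * ∫ t in τ₀..τ₁, q t := this.trans hIRe
    have hmul := mul_lt_mul_of_pos_right hcμ hI₀pos
    linarith
  · intro hR0
    set μ : ℝ := π / (2 * L) with hμdef
    clear_value μ
    have hμpos : 0 < μ := by
      rw [hμdef]
      exact div_pos Real.pi_pos (by linarith)
    have hμL : μ * L < π := by
      have : μ * L = π / 2 := by
        simp only [hμdef]; field_simp
      rw [this]
      linarith [Real.pi_pos]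
    have h1 := hWirt μ hμpos hμL
    rw [hA] at h1
    have h2 : ∫ t in τ₀..τ₁, e t ⬝ᵥ (R t *ᵥ e t) ≤ 0 := by
      have hneg : 0 ≤ ∫ t in τ₀..τ₁, -(e t ⬝ᵥ (R t *ᵥ e t)) :=
        intervalIntegral.integral_nonneg hle fun u _ => neg_nonneg.2 (hR0 u (e u))
      rw [intervalIntegral.integral_neg] at hneg
      linarith
    have hmul := mul_pos (pow_pos hμpos 2) hI₀pos
    linarith
end

section
/- Let n ≥ 1, c > 0, and a < b real numbers. Let A : [a,b] → Sym(n) be continuous with trace A(t) ≥ n·c for every t ∈ [a,b]. Then there is no differentiable curve B : [a,b] → Sym(n) satisfying the matrix Riccati equation Ḃ(t) = B(t)² + A(t) for all t ∈ [a,b] with b − a ≥ π/√c; equivalently, if such a B exists on [a,b], then b − a < π/√c. -/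
open Matrix Set Real

/-- **Comparison theorem, second part (matrix Riccati form).**
If `A : [a,b] → Sym(n)` is continuous with `trace A(t) ≥ n·c` (`c > 0`), and
`B : [a,b] → Sym(n)` is a differentiable solution of the matrix Riccati equation
`Ḃ = B² + A` on `[a,b]`, then `b - a < π/√c`. -/
theorem matrix_riccati_blowup
    (n : ℕ) (hn : 1 ≤ n) (c : ℝ) (hc : 0 < c)
    (a b : ℝ) (hab : a < b)
    (A B : ℝ → Matrix (Fin n) (Fin n) ℝ)
    (hAsymm : ∀ t ∈ Icc a b, (A t).IsSymm)
    (hAcont : ∀ i j, ContinuousOn (fun t => A t i j) (Icc a b))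
    (htr : ∀ t ∈ Icc a b, (n : ℝ) * c ≤ (A t).trace)
    (hBsymm : ∀ t ∈ Icc a b, (B t).IsSymm)
    (hB : ∀ t ∈ Icc a b, ∀ i j,
      HasDerivWithinAt (fun τ => B τ i j) ((B t * B t + A t) i j) (Icc a b) t) :
    b - a < π / Real.sqrt c := by
  set s := Real.sqrt c with hs
  have hs0 : 0 < s := Real.sqrt_pos.2 hc
  have hs2 : s ^ 2 = c := Real.sq_sqrt hc.le
  have hn0 : (0:ℝ) < (n : ℝ) := by exact_mod_cast Nat.lt_of_lt_of_le Nat.zero_lt_one hn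
  set g : ℝ → ℝ := fun t => (B t).trace with hgdef
  -- derivative of the trace
  have hgd : ∀ t ∈ Icc a b, HasDerivWithinAt g ((B t * B t + A t).trace) (Icc a b) t := by
    intro t ht
    have := HasDerivWithinAt.fun_sum
      (fun i (_ : i ∈ (Finset.univ : Finset (Fin n))) => hB t ht i i)
    simpa [Matrix.trace, Matrix.diag, hgdef] using this
  -- lower bound on the derivative
  have key : ∀ t ∈ Icc a b, (g t) ^ 2 / n + n * c ≤ (B t * B t + A t).trace := by
    intro t ht
    have hsymm := hBsymm t ht
    have htrBB : ∑ i, (B t i i) ^ 2 ≤ (B t * B t).trace := by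
      rw [Matrix.trace]
      refine Finset.sum_le_sum fun i _ => ?_
      have : (B t * B t).diag i = ∑ j, B t i j * B t j i := by
        simp [Matrix.diag, Matrix.mul_apply]
      rw [this]
      have heq : ∀ j, B t i j * B t j i = (B t i j) ^ 2 := by
        intro j; rw [hsymm.apply i j]; ring
      calc (B t i i) ^ 2 ≤ ∑ j, (B t i j) ^ 2 :=
            Finset.single_le_sum (f := fun j => B t i j ^ 2)
              (fun j _ => sq_nonneg _) (Finset.mem_univ i)
        _ = ∑ j, B t i j * B t j i := by simp [heq]
    have hCS : (g t) ^ 2 ≤ (n : ℝ) * ∑ i, (B t i i) ^ 2 := by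
      have := sq_sum_le_card_mul_sum_sq (s := (Finset.univ : Finset (Fin n)))
        (f := fun i => B t i i)
      simpa [hgdef, Matrix.trace, Matrix.diag] using this
    have h1 : (g t) ^ 2 / n ≤ (B t * B t).trace := by
      rw [div_le_iff₀ hn0]
      calc (g t) ^ 2 ≤ (n : ℝ) * ∑ i, (B t i i) ^ 2 := hCS
        _ ≤ (n : ℝ) * (B t * B t).trace := by
            exact mul_le_mul_of_nonneg_left htrBB hn0.le
        _ = (B t * B t).trace * n := by ring
    have h2 := htr t ht
    have : (B t * B t + A t).trace = (B t * B t).trace + (A t).trace := by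
      simp [Matrix.trace_add]
    linarith
  -- the comparison function
  set φ : ℝ → ℝ := fun t => Real.arctan (g t / ((n : ℝ) * s)) - s * t with hφdef
  set F' : ℝ → ℝ := fun t =>
    1 / (1 + (g t / ((n : ℝ) * s)) ^ 2) * ((B t * B t + A t).trace / ((n : ℝ) * s)) - s
    with hF'def
  have hgcont : ContinuousOn g (Icc a b) := fun t ht =>
    (hgd t ht).continuousWithinAt
  have hφcont : ContinuousOn φ (Icc a b) := by
    refine ContinuousOn.sub ?_ (continuous_const.mul continuous_id).continuousOn
    exact Real.continuous_arctan.comp_continuousOn (hgcont.div_const _)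
  have hφd : ∀ t ∈ interior (Icc a b),
      HasDerivWithinAt φ (F' t) (interior (Icc a b)) t := by
    intro t ht
    have ht' : t ∈ Icc a b := interior_subset ht
    have h1 : HasDerivWithinAt (fun τ => g τ / ((n : ℝ) * s))
        ((B t * B t + A t).trace / ((n : ℝ) * s)) (interior (Icc a b)) t :=
      ((hgd t ht').mono interior_subset).div_const _
    have h2 := h1.arctan
    have h3 : HasDerivWithinAt (fun τ => s * τ) s (interior (Icc a b)) t := by
      simpa using ((hasDerivAt_id t).const_mul s).hasDerivWithinAt
    simpa [hφdef, hF'def] using h2.fun_sub h3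
  have hF'nonneg : ∀ t ∈ interior (Icc a b), 0 ≤ F' t := by
    intro t ht
    have ht' : t ∈ Icc a b := interior_subset ht
    have hk := key t ht'
    set G := g t with hG
    set D := (B t * B t + A t).trace with hD
    have hden : (0:ℝ) < ((n : ℝ) * s) ^ 2 + G ^ 2 := by positivity
    have heq : 1 / (1 + (G / ((n : ℝ) * s)) ^ 2) * (D / ((n : ℝ) * s))
        = D * ((n : ℝ) * s) / (((n : ℝ) * s) ^ 2 + G ^ 2) := by
      field_simp
    rw [hF'def]
    simp only [sub_nonneg]
    rw [heq, le_div_iff₀ hden]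
    have hDn : G ^ 2 + (n : ℝ) ^ 2 * c ≤ D * n := by
      have h := mul_le_mul_of_nonneg_right hk hn0.le
      have hcancel : G ^ 2 / (n : ℝ) * n = G ^ 2 := div_mul_cancel₀ _ hn0.ne'
      nlinarith
    nlinarith [hs0, hs2, hn0, hDn]
  have hmono : MonotoneOn φ (Icc a b) :=
    monotoneOn_of_hasDerivWithinAt_nonneg (convex_Icc a b) hφcont hφd hF'nonneg
  have hφab : φ a ≤ φ b := hmono (left_mem_Icc.2 hab.le) (right_mem_Icc.2 hab.le) hab.le
  have hlt : s * (b - a) < π := by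
    have h1 : Real.arctan (g b / ((n : ℝ) * s)) < π / 2 := Real.arctan_lt_pi_div_two _
    have h2 : -(π / 2) < Real.arctan (g a / ((n : ℝ) * s)) := Real.neg_pi_div_two_lt_arctan _
    have : φ a ≤ φ b := hφab
    simp only [hφdef] at this
    nlinarith
  rw [lt_div_iff₀ hs0]
  nlinarith [hlt]
end

section
/- Let n ≥ 1 be an integer and c > 0. If a ≤ β and b : [a,β] → ℝ is a differentiable function satisfying ḃ(t) ≥ b(t)²/n + n·c for every t ∈ [a,β], then β − a < π/√c. -/
open Set Real

/-- **Scalar Riccati comparison.**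
If `b` is differentiable on `[a, β]` with `ḃ(t) ≥ b(t)²/n + n·c` there (`n ≥ 1`, `c > 0`),
then `β - a < π/√c`. -/
theorem scalar_riccati_blowup
    (n : ℕ) (hn : 1 ≤ n) (c : ℝ) (hc : 0 < c)
    (a β : ℝ) (haβ : a ≤ β)
    (b b' : ℝ → ℝ)
    (hderiv : ∀ t ∈ Icc a β, HasDerivWithinAt b (b' t) (Icc a β) t)
    (hineq : ∀ t ∈ Icc a β, b t ^ 2 / (n : ℝ) + (n : ℝ) * c ≤ b' t) :
    β - a < π / Real.sqrt c := by
  set s := Real.sqrt c with hs_def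
  have hs : 0 < s := Real.sqrt_pos.mpr hc
  have hn0 : (0 : ℝ) < (n : ℝ) := by exact_mod_cast hn
  set k : ℝ := (n : ℝ) * s with hk_def
  have hk : 0 < k := mul_pos hn0 hs
  have hk2 : k ^ 2 = (n : ℝ) ^ 2 * c := by
    rw [hk_def, mul_pow, Real.sq_sqrt hc.le]
  set g : ℝ → ℝ := fun t => Real.arctan (b t / k) with hg_def
  set g' : ℝ → ℝ := fun t => (1 / (1 + (b t / k) ^ 2)) * (b' t / k) with hg'_def
  -- derivative of g at interior points
  have hgderiv : ∀ t ∈ interior (Icc a β), HasDerivAt g (g' t) t := by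
    intro t ht
    rw [interior_Icc] at ht
    have hbt : HasDerivAt b (b' t) t :=
      (hderiv t (Ioo_subset_Icc_self ht)).hasDerivAt (Icc_mem_nhds ht.1 ht.2)
    have := (Real.hasDerivAt_arctan (b t / k)).comp t (hbt.div_const k)
    simpa [hg_def, hg'_def, mul_comm, Function.comp_def] using this
  -- g' ≥ s on interior
  have hg'ge : ∀ t ∈ interior (Icc a β), s ≤ g' t := by
    intro t ht
    rw [interior_Icc] at ht
    have hineqt := hineq t (Ioo_subset_Icc_self ht)
    have h1 : b t ^ 2 / (n : ℝ) + (n : ℝ) * c = (b t ^ 2 + k ^ 2) / n := by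
      rw [hk2]; field_simp
    have hden : 0 < 1 + (b t / k) ^ 2 := by positivity
    have key : g' t = k * b' t / (k ^ 2 + b t ^ 2) := by
      show 1 / (1 + (b t / k) ^ 2) * (b' t / k) = k * b' t / (k ^ 2 + b t ^ 2)
      rw [div_mul_eq_mul_div, one_mul, div_div,
        div_eq_div_iff (by positivity : (0:ℝ) < k * (1 + (b t / k) ^ 2)).ne' (by positivity : (0:ℝ) < k ^ 2 + b t ^ 2).ne']
      field_simp
    rw [key]
    have hpos : 0 < k ^ 2 + b t ^ 2 := by positivity
    rw [le_div_iff₀ hpos]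
    have : s * (k ^ 2 + b t ^ 2) = k * ((b t ^ 2 + k ^ 2) / n) := by
      rw [hk_def]; field_simp; ring
    rw [this]
    have hb' : (b t ^ 2 + k ^ 2) / n ≤ b' t := by rw [← h1]; exact hineqt
    exact mul_le_mul_of_nonneg_left hb' hk.le
  have hbcont : ContinuousOn b (Icc a β) := fun t ht => (hderiv t ht).continuousWithinAt
  have hgcont : ContinuousOn g (Icc a β) :=
    Real.continuous_arctan.comp_continuousOn (hbcont.div_const k)
  have hgdiff : DifferentiableOn ℝ g (interior (Icc a β)) := fun t ht =>
    (hgderiv t ht).differentiableAt.differentiableWithinAt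
  have hderivge : ∀ t ∈ interior (Icc a β), s ≤ deriv g t := fun t ht => by
    rw [(hgderiv t ht).deriv]; exact hg'ge t ht
  have hmvt := (convex_Icc a β).mul_sub_le_image_sub_of_le_deriv hgcont hgdiff hderivge
    a (left_mem_Icc.mpr haβ) β (right_mem_Icc.mpr haβ) haβ
  have hbound : g β - g a < π := by
    have h1 : g β < π / 2 := Real.arctan_lt_pi_div_two _
    have h2 : -(π / 2) < g a := Real.neg_pi_div_two_lt_arctan _
    linarith
  have : s * (β - a) < π := lt_of_le_of_lt hmvt hbound
  rw [lt_div_iff₀ hs]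
  nlinarith [this]
end

section
/- Let W be a finite-dimensional real normed vector space, J : W → ℝ and Φ : W → ℝᵐ twice continuously differentiable maps, w ∈ W with Φ(w) = z, and ℓ : ℝᵐ → ℝ a linear functional such that ℓ ∘ DΦ(w) = DJ(w) (a normal Lagrange multiplier at w). If the quadratic form x ↦ D²J(w)(x,x) − ℓ(D²Φ(w)(x,x)) is positive definite on ker DΦ(w) (i.e., positive for every nonzero x ∈ ker DΦ(w)), then w is a strict local minimizer of J restricted to the level set Φ⁻¹(z): there is a neighborhood U of w such that J(w') > J(w) for every w' ∈ U with Φ(w') = z and w' ≠ w. No regularity (surjectivity of DΦ(w)) is assumed. -/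
open Set Filter Topology

lemma penalty_aux (W : Type*) [NormedAddCommGroup W] [NormedSpace ℝ W] [FiniteDimensional ℝ W]
    {m : ℕ} (A : W → (Fin m → ℝ)) (B : W → ℝ) (hB : Continuous B) (hA : Continuous A)
    (hpos : ∀ u : W, A u = 0 → u ≠ 0 → 0 < B u) :
    ∃ ρ : ℝ, ∀ u : W, ‖u‖ = 1 → 0 < B u + ρ * ∑ i, 2 * A u i * A u i := by
  by_contra hcon
  push_neg at hcon
  choose u hu1 hu2 using fun n : ℕ => hcon n
  obtain ⟨u₀, hu₀, φ, hφ, hlim⟩ := (isCompact_sphere (0:W) 1).tendsto_subseq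
    (fun n => by simpa [mem_sphere_zero_iff_norm] using hu1 n)
  rw [mem_sphere_zero_iff_norm] at hu₀
  set S : W → ℝ := fun x => ∑ i, 2 * A x i * A x i with hSdef
  have hScont : Continuous S := by
    apply continuous_finset_sum
    intro i _
    exact (continuous_const.mul ((continuous_apply i).comp hA)).mul
      ((continuous_apply i).comp hA)
  have hSnonneg : ∀ x, 0 ≤ S x := by
    intro x
    apply Finset.sum_nonneg
    intro i _
    have := mul_self_nonneg (A x i)
    linarith
  have hlimB : Tendsto (fun n => B (u (φ n))) atTop (𝓝 (B u₀)) :=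
    (hB.continuousAt.tendsto).comp hlim
  have hlimS : Tendsto (fun n => S (u (φ n))) atTop (𝓝 (S u₀)) :=
    (hScont.continuousAt.tendsto).comp hlim
  have hS0 : S u₀ = 0 := by
    by_contra hS0
    have hSpos : 0 < S u₀ := lt_of_le_of_ne (hSnonneg u₀) (Ne.symm hS0)
    have hφtop : Tendsto (fun n => ((φ n : ℕ) : ℝ)) atTop atTop :=
      tendsto_natCast_atTop_atTop.comp hφ.tendsto_atTop
    have htop : Tendsto (fun n => B (u (φ n)) + (φ n : ℝ) * S (u (φ n))) atTop atTop :=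
      hlimB.add_atTop (hφtop.atTop_mul_pos hSpos hlimS)
    obtain ⟨n, hn⟩ := (htop.eventually_gt_atTop 0).exists
    exact absurd (hu2 (φ n)) (not_le.mpr hn)
  have hAu₀ : A u₀ = 0 := by
    funext i
    have h1 : ∀ j ∈ Finset.univ, 0 ≤ 2 * A u₀ j * A u₀ j := fun j _ => by
      have := mul_self_nonneg (A u₀ j); linarith
    have h2 := (Finset.sum_eq_zero_iff_of_nonneg h1).mp hS0 i (Finset.mem_univ i)
    have : A u₀ i * A u₀ i = 0 := by linarith
    simpa using mul_self_eq_zero.mp this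
  have hBpos : 0 < B u₀ := hpos u₀ hAu₀ (by intro h; rw [h] at hu₀; simp at hu₀)
  have hBle : B u₀ ≤ 0 := by
    apply le_of_tendsto hlimB
    filter_upwards with n
    have h1 := hu2 (φ n)
    have h2 : 0 ≤ (φ n : ℝ) * S (u (φ n)) :=
      mul_nonneg (Nat.cast_nonneg _) (hSnonneg _)
    linarith
  linarith

/-- **Sufficient optimality condition via the Lagrange multiplier.**
Let `W` be a finite-dimensional real normed space, `J : W → ℝ`, `Φ : W → ℝᵐ` be C²,
`Φ w = z`, and `ℓ` a linear functional with `ℓ ∘ DΦ(w) = DJ(w)`.  If the quadratic form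
`x ↦ D²J(w)(x,x) - ℓ(D²Φ(w)(x,x))` is positive definite on `ker DΦ(w)`, then `w` is a
strict local minimizer of `J` on the level set `Φ⁻¹(z)`. -/
theorem lagrange_second_order_sufficiency
    (m : ℕ) (W : Type*) [NormedAddCommGroup W] [NormedSpace ℝ W] [FiniteDimensional ℝ W]
    (J : W → ℝ) (Φ : W → (Fin m → ℝ))
    (hJ : ContDiff ℝ 2 J) (hΦ : ContDiff ℝ 2 Φ)
    (w : W) (z : Fin m → ℝ) (hwz : Φ w = z)
    (ℓ : (Fin m → ℝ) →ₗ[ℝ] ℝ)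
    (hℓ : ∀ x : W, ℓ (fderiv ℝ Φ w x) = fderiv ℝ J w x)
    (hpos : ∀ x : W, fderiv ℝ Φ w x = 0 → x ≠ 0 →
      0 < fderiv ℝ (fderiv ℝ J) w x x - ℓ (fderiv ℝ (fderiv ℝ Φ) w x x)) :
    ∃ U ∈ nhds w, ∀ w' ∈ U, Φ w' = z → w' ≠ w → J w < J w' := by
  classical
  -- basic differentiability facts
  have hJd : Differentiable ℝ J := hJ.differentiable (by norm_num)
  have hΦd : Differentiable ℝ Φ := hΦ.differentiable (by norm_num)
  have hJ1 : ContDiff ℝ 1 (fderiv ℝ J) := hJ.fderiv_right (by norm_num)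
  have hΦ1 : ContDiff ℝ 1 (fderiv ℝ Φ) := hΦ.fderiv_right (by norm_num)
  have hJ'd : Differentiable ℝ (fderiv ℝ J) := hJ1.differentiable one_ne_zero
  have hΦ'd : Differentiable ℝ (fderiv ℝ Φ) := hΦ1.differentiable one_ne_zero
  have hJ''c : Continuous (fderiv ℝ (fderiv ℝ J)) := hJ1.continuous_fderiv one_ne_zero
  have hΦ''c : Continuous (fderiv ℝ (fderiv ℝ Φ)) := hΦ1.continuous_fderiv one_ne_zero
  have hΦ'c : Continuous (fderiv ℝ Φ) := hΦ.continuous_fderiv (by norm_num)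
  set L : (Fin m → ℝ) →L[ℝ] ℝ := LinearMap.toContinuousLinearMap ℓ with hL
  have hLapp : ∀ v, L v = ℓ v := fun v => rfl
  -- the penalty parameter
  obtain ⟨ρ, hρ⟩ := penalty_aux W (fun x => fderiv ℝ Φ w x)
    (fun x => fderiv ℝ (fderiv ℝ J) w x x - L (fderiv ℝ (fderiv ℝ Φ) w x x))
    (by
      apply Continuous.sub
      · exact ((fderiv ℝ (fderiv ℝ J) w).continuous.clm_apply continuous_id)
      · exact L.continuous.comp ((fderiv ℝ (fderiv ℝ Φ) w).continuous.clm_apply continuous_id))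
    (fderiv ℝ Φ w).continuous
    (fun u hu hu0 => by simpa [hLapp] using hpos u hu hu0)
  -- the function F p = "Hessian of the penalized functional at p.1 in direction p.2"
  set F : W × W → ℝ := fun p =>
      fderiv ℝ (fderiv ℝ J) p.1 p.2 p.2 - L (fderiv ℝ (fderiv ℝ Φ) p.1 p.2 p.2)
        + ρ * ∑ i, (2 * fderiv ℝ Φ p.1 p.2 i * fderiv ℝ Φ p.1 p.2 i
            + 2 * (Φ p.1 i - z i) * fderiv ℝ (fderiv ℝ Φ) p.1 p.2 p.2 i) with hF
  have hFcont : Continuous F := by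
    apply Continuous.add
    · apply Continuous.sub
      · exact ((hJ''c.comp continuous_fst).clm_apply continuous_snd).clm_apply continuous_snd
      · exact L.continuous.comp
          (((hΦ''c.comp continuous_fst).clm_apply continuous_snd).clm_apply continuous_snd)
    · apply continuous_const.mul
      apply continuous_finset_sum
      intro i _
      have hD : Continuous fun p : W × W => fderiv ℝ Φ p.1 p.2 i :=
        (continuous_apply i).comp ((hΦ'c.comp continuous_fst).clm_apply continuous_snd)
      have hD2 : Continuous fun p : W × W => fderiv ℝ (fderiv ℝ Φ) p.1 p.2 p.2 i :=
        (continuous_apply i).comp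
          (((hΦ''c.comp continuous_fst).clm_apply continuous_snd).clm_apply continuous_snd)
      exact ((continuous_const.mul hD).mul hD).add
        ((continuous_const.mul (((continuous_apply i).comp
          (hΦd.continuous.comp continuous_fst)).sub continuous_const)).mul hD2)
  -- F is positive on {w} × sphere
  have hFw : ∀ p ∈ ({w} ×ˢ Metric.sphere (0:W) 1 : Set (W × W)), 0 < F p := by
    rintro ⟨x, u⟩ ⟨hx, hu⟩
    simp only [mem_singleton_iff] at hx
    rw [mem_sphere_zero_iff_norm] at hu
    rw [show ((x,u) : W × W) = (w, u) from by rw [hx]]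
    have hsum : ∀ i ∈ Finset.univ, (2 * fderiv ℝ Φ w u i * fderiv ℝ Φ w u i
        + 2 * (Φ w i - z i) * fderiv ℝ (fderiv ℝ Φ) w u u i)
          = 2 * fderiv ℝ Φ w u i * fderiv ℝ Φ w u i := fun i _ => by rw [hwz]; ring
    simp only [hF]
    rw [Finset.sum_congr rfl hsum]
    exact hρ u hu
  -- tube lemma
  obtain ⟨U₁, V₁, hU₁o, _, hwU₁, hsV₁, hUV⟩ :=
    generalized_tube_lemma isCompact_singleton (isCompact_sphere (0:W) 1)
      (isOpen_lt continuous_const hFcont) (fun p hp => hFw p hp)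
  obtain ⟨δ, hδpos, hδ⟩ := Metric.isOpen_iff.mp hU₁o w (hwU₁ rfl)
  refine ⟨Metric.ball w δ, Metric.ball_mem_nhds w hδpos, ?_⟩
  intro w' hw' hΦw' hne
  -- the direction
  set h : W := w' - w with hh
  have hh0 : h ≠ 0 := sub_ne_zero.mpr hne
  have hr : (0:ℝ) < ‖h‖ := norm_pos_iff.mpr hh0
  have hhδ : ‖h‖ < δ := by
    rw [Metric.mem_ball, dist_eq_norm] at hw'; exact hw'
  set u : W := ‖h‖⁻¹ • h with huu
  have hu1 : ‖u‖ = 1 := by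
    rw [huu, norm_smul, norm_inv, norm_norm, inv_mul_cancel₀ (ne_of_gt hr)]
  set c : ℝ → W := fun t => w + t • u with hcdef
  have hc : ∀ t, HasDerivAt c u t := by
    intro t
    have := ((hasDerivAt_id t).smul_const u).const_add w
    simpa [hcdef] using this
  have hcball : ∀ t ∈ Icc (0:ℝ) ‖h‖, c t ∈ Metric.ball w δ := by
    intro t ht
    rw [Metric.mem_ball, dist_eq_norm, hcdef]
    simp only [add_sub_cancel_left]
    rw [norm_smul, Real.norm_eq_abs, abs_of_nonneg ht.1, hu1, mul_one]
    exact lt_of_le_of_lt ht.2 hhδ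
  have hcr : c ‖h‖ = w' := by
    rw [hcdef]
    simp only [huu, smul_smul, mul_inv_cancel₀ (ne_of_gt hr), one_smul]
    rw [hh]; abel
  have hc0 : c 0 = w := by simp [hcdef]
  -- the penalized functional along the line, and its derivatives
  set g : W → ℝ := fun x => J x - L (Φ x) + ρ * ∑ i, (Φ x i - z i) ^ 2 with hg
  set ψ : ℝ → ℝ := fun t => fderiv ℝ J (c t) u - L (fderiv ℝ Φ (c t) u)
      + ρ * ∑ i, 2 * (Φ (c t) i - z i) * fderiv ℝ Φ (c t) u i with hψ
  have hΦline : ∀ t, HasDerivAt (fun t => Φ (c t)) (fderiv ℝ Φ (c t) u) t := fun t =>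
    ((hΦd (c t)).hasFDerivAt).comp_hasDerivAt t (hc t)
  have hΦiline : ∀ t i, HasDerivAt (fun t => Φ (c t) i) (fderiv ℝ Φ (c t) u i) t := fun t i =>
    (ContinuousLinearMap.proj (R := ℝ) (φ := fun _ : Fin m => ℝ) i).hasFDerivAt.comp_hasDerivAt
      t (hΦline t)
  have hDΦline : ∀ t, HasDerivAt (fun t => fderiv ℝ Φ (c t))
      (fderiv ℝ (fderiv ℝ Φ) (c t) u) t := fun t =>
    ((hΦ'd (c t)).hasFDerivAt).comp_hasDerivAt t (hc t)
  have hDΦuline : ∀ t, HasDerivAt (fun t => fderiv ℝ Φ (c t) u)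
      (fderiv ℝ (fderiv ℝ Φ) (c t) u u) t := fun t => by
    simpa using (hDΦline t).clm_apply (hasDerivAt_const t u)
  have hDΦuiline : ∀ t i, HasDerivAt (fun t => fderiv ℝ Φ (c t) u i)
      (fderiv ℝ (fderiv ℝ Φ) (c t) u u i) t := fun t i =>
    (ContinuousLinearMap.proj (R := ℝ) (φ := fun _ : Fin m => ℝ) i).hasFDerivAt.comp_hasDerivAt
      t (hDΦuline t)
  have hDJline : ∀ t, HasDerivAt (fun t => fderiv ℝ J (c t))
      (fderiv ℝ (fderiv ℝ J) (c t) u) t := fun t =>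
    ((hJ'd (c t)).hasFDerivAt).comp_hasDerivAt t (hc t)
  have hDJuline : ∀ t, HasDerivAt (fun t => fderiv ℝ J (c t) u)
      (fderiv ℝ (fderiv ℝ J) (c t) u u) t := fun t => by
    simpa using (hDJline t).clm_apply (hasDerivAt_const t u)
  have hφψ : ∀ t, HasDerivAt (fun t => g (c t)) (ψ t) t := by
    intro t
    have h1 : HasDerivAt (fun t => J (c t)) (fderiv ℝ J (c t) u) t :=
      ((hJd (c t)).hasFDerivAt).comp_hasDerivAt t (hc t)
    have h3 : HasDerivAt (fun t => L (Φ (c t))) (L (fderiv ℝ Φ (c t) u)) t :=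
      L.hasFDerivAt.comp_hasDerivAt t (hΦline t)
    have h4 : ∀ i, HasDerivAt (fun t => (Φ (c t) i - z i) ^ 2)
        (2 * (Φ (c t) i - z i) * fderiv ℝ Φ (c t) u i) t := by
      intro i
      have := ((hΦiline t i).sub_const (z i)).fun_pow 2
      simpa using this
    have h5 : HasDerivAt (fun t => ∑ i, (Φ (c t) i - z i) ^ 2)
        (∑ i, 2 * (Φ (c t) i - z i) * fderiv ℝ Φ (c t) u i) t :=
      HasDerivAt.fun_sum (fun i _ => h4 i)
    exact (h1.sub h3).add (h5.const_mul ρ)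
  have hψF : ∀ t, HasDerivAt ψ (F (c t, u)) t := by
    intro t
    have h4 : ∀ i, HasDerivAt (fun t => 2 * (Φ (c t) i - z i) * fderiv ℝ Φ (c t) u i)
        (2 * fderiv ℝ Φ (c t) u i * fderiv ℝ Φ (c t) u i
          + 2 * (Φ (c t) i - z i) * fderiv ℝ (fderiv ℝ Φ) (c t) u u i) t := by
      intro i
      have hf : HasDerivAt (fun t => 2 * (Φ (c t) i - z i)) (2 * fderiv ℝ Φ (c t) u i) t :=
        ((hΦiline t i).sub_const (z i)).const_mul 2
      exact hf.mul (hDΦuiline t i)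
    have h5 : HasDerivAt (fun t => ∑ i, 2 * (Φ (c t) i - z i) * fderiv ℝ Φ (c t) u i)
        (∑ i, (2 * fderiv ℝ Φ (c t) u i * fderiv ℝ Φ (c t) u i
          + 2 * (Φ (c t) i - z i) * fderiv ℝ (fderiv ℝ Φ) (c t) u u i)) t :=
      HasDerivAt.fun_sum (fun i _ => h4 i)
    have h3 : HasDerivAt (fun t => L (fderiv ℝ Φ (c t) u))
        (L (fderiv ℝ (fderiv ℝ Φ) (c t) u u)) t :=
      L.hasFDerivAt.comp_hasDerivAt t (hDΦuline t)
    exact ((hDJuline t).sub h3).add (h5.const_mul ρ)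
  -- first mean value theorem
  obtain ⟨ξ, hξ, hξeq⟩ := exists_hasDerivAt_eq_slope (fun t => g (c t)) ψ hr
    (fun t _ => (hφψ t).continuousAt.continuousWithinAt) (fun t _ => hφψ t)
  -- second mean value theorem
  obtain ⟨η, hη, hηeq⟩ := exists_hasDerivAt_eq_slope ψ (fun t => F (c t, u)) hξ.1
    (fun t _ => (hψF t).continuousAt.continuousWithinAt) (fun t _ => hψF t)
  have hψ0 : ψ 0 = 0 := by
    simp only [hψ, hc0]
    simp [hLapp, hℓ, hwz]
  -- c η is in the tube, hence F (c η, u) > 0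
  have hcη : c η ∈ U₁ := hδ (hcball η ⟨hη.1.le, (hη.2.trans hξ.2).le⟩)
  have hFpos : 0 < F (c η, u) :=
    hUV (Set.mem_prod.mpr ⟨hcη, hsV₁ (by rw [mem_sphere_zero_iff_norm]; exact hu1)⟩)
  -- conclude
  rw [hψ0, sub_zero, sub_zero] at hηeq
  have hψξ : ψ ξ = F (c η, u) * ξ := (div_eq_iff (ne_of_gt hξ.1)).mp hηeq.symm
  have hψξpos : 0 < ψ ξ := hψξ ▸ mul_pos hFpos hξ.1
  rw [hcr, hc0, sub_zero] at hξeq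
  have hgdiff : g w' - g w = ψ ξ * ‖h‖ := (div_eq_iff (ne_of_gt hr)).mp hξeq.symm
  have hgpos : 0 < g w' - g w := hgdiff ▸ mul_pos hψξpos hr
  have hgw' : g w' = J w' - L z := by simp [hg, hΦw']
  have hgw : g w = J w - L z := by simp [hg, hwz]
  rw [hgw', hgw] at hgpos
  linarith
end

section
/- Let W be a real vector space, A : W → ℝᵐ a linear map, and Q a symmetric bilinear form on W. Define L⁰(A,Q) = {(ζ, Aw) ∈ ℝᵐ × ℝᵐ : ζ ∈ ℝᵐ, w ∈ W, ⟨ζ, Av⟩ = Q(w,v) for all v ∈ W}. Then: (1) L⁰(A,Q) is a linear subspace of ℝᵐ × ℝᵐ on which the standard symplectic form ω vanishes (an isotropic subspace), so in particular dim L⁰(A,Q) ≤ m; (2) if W is finite-dimensional, then dim L⁰(A,Q) = m, i.e., L⁰(A,Q) is a Lagrangian subspace of (ℝᵐ × ℝᵐ, ω). -/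
open Matrix

namespace L0Aux

open Module LinearMap

/-- Dot product as a linear equivalence with the dual. -/
noncomputable def dotEquiv (m : ℕ) : (Fin m → ℝ) ≃ₗ[ℝ] Module.Dual ℝ (Fin m → ℝ) :=
  (Pi.basisFun ℝ (Fin m)).toDualEquiv

lemma dotEquiv_apply {m : ℕ} (ζ v : Fin m → ℝ) : dotEquiv m ζ v = ζ ⬝ᵥ v := by
  have h : ∑ i, v i • (Pi.basisFun ℝ (Fin m)) i = v := by
    simpa [Pi.basisFun_repr] using (Pi.basisFun ℝ (Fin m)).sum_repr v
  have : dotEquiv m ζ v = (Pi.basisFun ℝ (Fin m)).toDual ζ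
      (∑ i, v i • (Pi.basisFun ℝ (Fin m)) i) := by
    rw [h]; rfl
  rw [this, map_sum]
  simp only [_root_.map_smul, smul_eq_mul, Basis.toDual_apply_left, Pi.basisFun_repr,
    dotProduct]
  exact Finset.sum_congr rfl fun i _ => mul_comm _ _

variable {m : ℕ} {W : Type*} [AddCommGroup W] [Module ℝ W]
  (A : W →ₗ[ℝ] (Fin m → ℝ)) (Q : W →ₗ[ℝ] W →ₗ[ℝ] ℝ)

/-- The constraint map whose kernel encodes `⟨ζ, Av⟩ = Q(w,v)`. -/
noncomputable def psi : ((Fin m → ℝ) × W) →ₗ[ℝ] Module.Dual ℝ W :=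
  (A.dualMap ∘ₗ (dotEquiv m).toLinearMap ∘ₗ LinearMap.fst ℝ (Fin m → ℝ) W)
    - (Q ∘ₗ LinearMap.snd ℝ (Fin m → ℝ) W)

lemma psi_apply (ζ : Fin m → ℝ) (w v : W) : psi A Q (ζ, w) v = ζ ⬝ᵥ A v - Q w v := by
  simp [psi, dotEquiv_apply]

/-- The projection `(ζ, w) ↦ (ζ, A w)`. -/
def T : ((Fin m → ℝ) × W) →ₗ[ℝ] (Fin m → ℝ) × (Fin m → ℝ) :=
  LinearMap.prodMap LinearMap.id A

@[simp] lemma T_apply (ζ : Fin m → ℝ) (w : W) : T A (ζ, w) = (ζ, A w) := rfl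

/-- The space `L⁰(A,Q)`. -/
noncomputable def L : Submodule ℝ ((Fin m → ℝ) × (Fin m → ℝ)) :=
  (LinearMap.ker (psi A Q)).map (T A)

lemma mem_ker_psi (ζ : Fin m → ℝ) (w : W) :
    (ζ, w) ∈ LinearMap.ker (psi A Q) ↔ ∀ v, ζ ⬝ᵥ A v = Q w v := by
  simp only [LinearMap.mem_ker, LinearMap.ext_iff, psi_apply, sub_eq_zero,
    LinearMap.zero_apply]

lemma coe_L : (L A Q : Set ((Fin m → ℝ) × (Fin m → ℝ)))
    = {p | ∃ (ζ : Fin m → ℝ) (w : W), p = (ζ, A w) ∧ ∀ v : W, ζ ⬝ᵥ (A v) = Q w v} := by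
  ext p
  simp only [L, SetLike.mem_coe, Submodule.mem_map, Set.mem_setOf_eq, Prod.exists, T_apply,
    mem_ker_psi]
  constructor
  · rintro ⟨ζ, w, hw, rfl⟩
    exact ⟨ζ, w, rfl, hw⟩
  · rintro ⟨ζ, w, rfl, hw⟩
    exact ⟨ζ, w, hw, rfl⟩

/-- The standard symplectic form on `ℝᵐ × ℝᵐ`. -/
noncomputable def omegaForm (m : ℕ) : LinearMap.BilinForm ℝ ((Fin m → ℝ) × (Fin m → ℝ)) :=
  LinearMap.mk₂ ℝ (fun p q => p.1 ⬝ᵥ q.2 - q.1 ⬝ᵥ p.2)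
    (by intros; simp [add_dotProduct, dotProduct_add]; ring)
    (by intros; simp [smul_dotProduct, dotProduct_smul, smul_eq_mul]; ring)
    (by intros; simp [add_dotProduct, dotProduct_add]; ring)
    (by intros; simp [smul_dotProduct, dotProduct_smul, smul_eq_mul]; ring)

@[simp] lemma omegaForm_apply (p q : (Fin m → ℝ) × (Fin m → ℝ)) :
    omegaForm m p q = p.1 ⬝ᵥ q.2 - q.1 ⬝ᵥ p.2 := rfl

lemma omegaForm_isRefl : (omegaForm m).IsRefl := by
  intro p q h
  simp only [omegaForm_apply, sub_eq_zero] at h ⊢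
  exact h.symm

lemma omegaForm_nondegenerate : (omegaForm m).Nondegenerate := by
  refine omegaForm_isRefl.nondegenerate_iff_separatingLeft.mpr ?_
  intro p hp
  have h := hp (-p.2, p.1)
  simp only [omegaForm_apply, neg_dotProduct, sub_neg_eq_add] at h
  have hn1 : 0 ≤ p.1 ⬝ᵥ p.1 := by
    simp only [dotProduct]; exact Finset.sum_nonneg fun i _ => mul_self_nonneg _
  have hn2 : 0 ≤ p.2 ⬝ᵥ p.2 := by
    simp only [dotProduct]; exact Finset.sum_nonneg fun i _ => mul_self_nonneg _
  have h2 : p.1 = 0 := dotProduct_self_eq_zero.mp (by linarith)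
  have h3 : p.2 = 0 := dotProduct_self_eq_zero.mp (by linarith)
  exact Prod.ext h2 h3

variable (hQ : ∀ v w : W, Q v w = Q w v)

include hQ in
lemma L_isotropic : ∀ p ∈ L A Q, ∀ q ∈ L A Q, p.1 ⬝ᵥ q.2 - q.1 ⬝ᵥ p.2 = 0 := by
  intro p hp q hq
  rw [← SetLike.mem_coe, coe_L] at hp hq
  obtain ⟨ζ₁, w₁, rfl, h₁⟩ := hp
  obtain ⟨ζ₂, w₂, rfl, h₂⟩ := hq
  simp only [h₁ w₂, h₂ w₁, hQ w₁ w₂, sub_self]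

include hQ in
lemma finrank_L_le : Module.finrank ℝ (L A Q) ≤ m := by
  have hle : L A Q ≤ (omegaForm m).orthogonal (L A Q) := by
    intro q hq p hp
    have := L_isotropic A Q hQ p hp q hq
    simpa [LinearMap.BilinForm.IsOrtho] using this
  have h1 : Module.finrank ℝ ((omegaForm m).orthogonal (L A Q))
      = Module.finrank ℝ ((Fin m → ℝ) × (Fin m → ℝ)) - Module.finrank ℝ (L A Q) :=
    LinearMap.BilinForm.finrank_orthogonal omegaForm_nondegenerate _
  have h2 : Module.finrank ℝ (L A Q)
      ≤ Module.finrank ℝ ((omegaForm m).orthogonal (L A Q)) := Submodule.finrank_mono hle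
  have h3 : Module.finrank ℝ ((Fin m → ℝ) × (Fin m → ℝ)) = m + m := by
    simp [Module.finrank_prod, Module.finrank_fin_fun]
  have h4 : Module.finrank ℝ (L A Q) ≤ m + m := by
    rw [← h3]; exact Submodule.finrank_le _
  omega

/-- The companion map `w ↦ (A w, Q w)`. -/
noncomputable def chi : W →ₗ[ℝ] (Fin m → ℝ) × Module.Dual ℝ W := A.prod Q

include hQ in
lemma psi_eq [FiniteDimensional ℝ W] :
    psi A Q = (chi A Q).dualMap ∘ₗ
      (((LinearEquiv.refl ℝ (Fin m → ℝ)).prodCongr (LinearEquiv.neg ℝ)).trans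
        (((dotEquiv m).prodCongr (Module.evalEquiv ℝ W)).trans
          (Module.dualProdDualEquivDual ℝ (Fin m → ℝ) (Module.Dual ℝ W)))).toLinearMap := by
  refine LinearMap.ext fun p => LinearMap.ext fun v => ?_
  obtain ⟨ζ, w⟩ := p
  simp only [psi_apply, LinearMap.comp_apply, LinearEquiv.coe_coe, LinearEquiv.trans_apply,
    LinearEquiv.prodCongr_apply, LinearEquiv.refl_apply,
    Module.dualProdDualEquivDual_apply, LinearMap.dualMap_apply, LinearMap.coprod_apply,
    chi, LinearMap.prod_apply, Pi.prod, Function.prod_apply, dotEquiv_apply]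
  have : (Module.evalEquiv ℝ W) ((LinearEquiv.neg ℝ) w) (Q v) = -(Q v w) := by
    simp [Module.evalEquiv_toLinearMap]
  rw [this, hQ w v]
  ring

include hQ in
lemma finrank_L_eq [FiniteDimensional ℝ W] : Module.finrank ℝ (L A Q) = m := by
  classical
  set S := LinearMap.ker (psi A Q) with hS
  -- rank-nullity for ψ
  have h1 : Module.finrank ℝ (LinearMap.range (psi A Q)) + Module.finrank ℝ S
      = m + Module.finrank ℝ W := by
    rw [LinearMap.finrank_range_add_finrank_ker]
    simp [Module.finrank_prod, Module.finrank_fin_fun]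
  -- rank-nullity for T restricted to S
  have h2 : Module.finrank ℝ (L A Q)
      + Module.finrank ℝ (LinearMap.ker ((T A) ∘ₗ S.subtype)) = Module.finrank ℝ S := by
    have := LinearMap.finrank_range_add_finrank_ker ((T A) ∘ₗ S.subtype)
    rwa [LinearMap.range_comp, Submodule.range_subtype] at this
  -- identify the kernel of the restriction
  have hker : LinearMap.ker ((T A) ∘ₗ S.subtype)
      = Submodule.comap S.subtype (LinearMap.ker (T A) ⊓ S) := by
    rw [LinearMap.ker_comp, Submodule.comap_inf, Submodule.comap_subtype_self, inf_top_eq]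
  have hKprod : LinearMap.ker (T A) ⊓ S
      = (⊥ : Submodule ℝ (Fin m → ℝ)).prod (LinearMap.ker A ⊓ LinearMap.ker Q) := by
    ext ⟨ζ, w⟩
    rw [Submodule.mem_inf, hS, mem_ker_psi, LinearMap.mem_ker, T_apply, Prod.mk_eq_zero,
      Submodule.mem_prod]
    simp only [Submodule.mem_bot, Submodule.mem_inf, LinearMap.mem_ker]
    constructor
    · rintro ⟨⟨rfl, hAw⟩, hpsi⟩
      refine ⟨rfl, hAw, LinearMap.ext fun v => ?_⟩
      simpa using (hpsi v).symm
    · rintro ⟨rfl, hAw, hQw⟩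
      exact ⟨⟨rfl, hAw⟩, fun v => by simp [hQw]⟩
  have h3 : Module.finrank ℝ (LinearMap.ker ((T A) ∘ₗ S.subtype))
      = Module.finrank ℝ (LinearMap.ker A ⊓ LinearMap.ker Q : Submodule ℝ W) := by
    rw [hker]
    rw [LinearEquiv.finrank_eq (Submodule.comapSubtypeEquivOfLe inf_le_right)]
    rw [hKprod]
    have hbot : (⊥ : Submodule ℝ (Fin m → ℝ)).prod (LinearMap.ker A ⊓ LinearMap.ker Q)
        = (LinearMap.ker A ⊓ LinearMap.ker Q).map (LinearMap.inr ℝ (Fin m → ℝ) W) := by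
      ext ⟨ζ, w⟩
      simp only [Submodule.mem_prod, Submodule.mem_bot, Submodule.mem_map,
        LinearMap.inr_apply, Prod.mk.injEq]
      constructor
      · rintro ⟨rfl, hw⟩
        exact ⟨w, hw, rfl, rfl⟩
      · rintro ⟨y, hy, rfl, rfl⟩
        exact ⟨rfl, hy⟩
    rw [hbot]
    exact (LinearEquiv.finrank_eq
      (Submodule.equivMapOfInjective _ LinearMap.inr_injective _)).symm
  -- rank-nullity for χ
  have h4 : Module.finrank ℝ (LinearMap.range (chi A Q))
      + Module.finrank ℝ (LinearMap.ker A ⊓ LinearMap.ker Q : Submodule ℝ W)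
      = Module.finrank ℝ W := by
    have := LinearMap.finrank_range_add_finrank_ker (chi A Q)
    rwa [show LinearMap.ker (chi A Q) = LinearMap.ker A ⊓ LinearMap.ker Q from
      LinearMap.ker_prod A Q] at this
  -- ranks of ψ and χ agree
  have h5 : Module.finrank ℝ (LinearMap.range (psi A Q))
      = Module.finrank ℝ (LinearMap.range (chi A Q)) := by
    rw [psi_eq A Q hQ, LinearMap.range_comp_of_range_eq_top _ (LinearEquiv.range _),
      LinearMap.finrank_range_dualMap_eq_finrank_range]
  omega

end L0Aux

/-- **The space `L⁰(A,Q)` is isotropic, and Lagrangian in finite dimension.**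
For a linear map `A : W → ℝᵐ` and a symmetric bilinear form `Q` on `W`, the set
`L⁰(A,Q) = {(ζ, Aw) : ⟨ζ, Av⟩ = Q(w,v) ∀v}` is a linear subspace of `ℝᵐ × ℝᵐ` on which
the standard symplectic form vanishes (hence of dimension at most `m`), and if `W` is
finite-dimensional its dimension is exactly `m` (it is Lagrangian). -/
theorem L0_isotropic_and_lagrangian
    (m : ℕ) (W : Type*) [AddCommGroup W] [Module ℝ W]
    (A : W →ₗ[ℝ] (Fin m → ℝ)) (Q : W →ₗ[ℝ] W →ₗ[ℝ] ℝ)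
    (hQ : ∀ v w : W, Q v w = Q w v) :
    ∃ L : Submodule ℝ ((Fin m → ℝ) × (Fin m → ℝ)),
      (L : Set ((Fin m → ℝ) × (Fin m → ℝ)))
          = {p | ∃ (ζ : Fin m → ℝ) (w : W), p = (ζ, A w) ∧ ∀ v : W, ζ ⬝ᵥ (A v) = Q w v} ∧
      (∀ p ∈ L, ∀ q ∈ L, p.1 ⬝ᵥ q.2 - q.1 ⬝ᵥ p.2 = 0) ∧
      Module.finrank ℝ L ≤ m ∧
      (∀ _ : FiniteDimensional ℝ W, Module.finrank ℝ L = m) := by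
  exact ⟨L0Aux.L A Q, L0Aux.coe_L A Q, L0Aux.L_isotropic A Q hQ,
    L0Aux.finrank_L_le A Q hQ, fun _ => L0Aux.finrank_L_eq A Q hQ⟩
end

section
/- Let W be a finite-dimensional real vector space, A : W → ℝᵐ a surjective linear map, and Q a symmetric bilinear form on W such that {w ∈ W : Aw = 0 and Q(w,v) = 0 for all v ∈ W} = {0}. Define L⁰(A,Q) = {(ζ, Aw) ∈ ℝᵐ × ℝᵐ : ζ ∈ ℝᵐ, w ∈ W, ⟨ζ, Av⟩ = Q(w,v) for all v ∈ W}. Then the restriction of Q to ker A is a nondegenerate bilinear form if and only if L⁰(A,Q) ∩ (ℝᵐ × {0}) = {0}. -/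
open Matrix

/-- **Nondegeneracy of the Hessian vs. transversality of the L-derivative.**
Let `A : W → ℝᵐ` be a surjective linear map on a finite-dimensional space and `Q` a
symmetric bilinear form with `ker A ∩ ker Q = 0`.  Then `Q|_{ker A}` is nondegenerate
iff `L⁰(A,Q) ∩ (ℝᵐ × {0}) = 0`, where
`L⁰(A,Q) = {(ζ, Aw) : ⟨ζ, Av⟩ = Q(w,v) ∀v}`. -/
theorem hessian_nondegenerate_iff_transversal
    (m : ℕ) (W : Type*) [AddCommGroup W] [Module ℝ W] [FiniteDimensional ℝ W]
    (A : W →ₗ[ℝ] (Fin m → ℝ)) (hA : Function.Surjective A)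
    (Q : W →ₗ[ℝ] W →ₗ[ℝ] ℝ) (hQ : ∀ v w : W, Q v w = Q w v)
    (hker : ∀ w : W, A w = 0 → (∀ v : W, Q w v = 0) → w = 0) :
    (∀ w : W, A w = 0 → (∀ v : W, A v = 0 → Q w v = 0) → w = 0) ↔
      (∀ (ζ : Fin m → ℝ) (w : W), (∀ v : W, ζ ⬝ᵥ (A v) = Q w v) → A w = 0 → ζ = 0) := by
  constructor
  · intro hnd ζ w hζ hAw
    have hw : w = 0 := hnd w hAw (fun v hv => by rw [← hζ v, hv, dotProduct_zero])
    subst hw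
    funext i
    obtain ⟨v, hv⟩ := hA (Pi.single i 1)
    have h := hζ v
    rw [hv] at h
    simpa using h
  · intro ht w hAw hQker
    have hle : LinearMap.ker A ≤ LinearMap.ker (Q w) := fun v hv => hQker v hv
    let e := A.quotKerEquivOfSurjective hA
    let ψ : (Fin m → ℝ) →ₗ[ℝ] ℝ :=
      ((LinearMap.ker A).liftQ (Q w) hle).comp (e.symm : (Fin m → ℝ) →ₗ[ℝ] _)
    set ζ : Fin m → ℝ := fun i => ψ (Pi.single i 1) with hζdef
    have hψ : ∀ x, ψ x = ζ ⬝ᵥ x := by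
      intro x
      have hx : x = ∑ i, x i • (Pi.single i 1 : Fin m → ℝ) := by
        funext j
        simp [Pi.single_apply, eq_comm]
      conv_lhs => rw [hx]
      rw [map_sum]
      simp [dotProduct, mul_comm, hζdef]
    have key : ∀ v, ζ ⬝ᵥ A v = Q w v := by
      intro v
      rw [← hψ]
      show ((LinearMap.ker A).liftQ (Q w) hle) (e.symm (A v)) = Q w v
      have he : e.symm (A v) = Submodule.Quotient.mk v := by
        rw [LinearEquiv.symm_apply_eq]
        rfl
      rw [he, Submodule.liftQ_apply]
    have hζ0 : ζ = 0 := ht ζ w key hAw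
    apply hker w hAw
    intro v
    rw [← key v, hζ0, zero_dotProduct]
end

section
/- Let S : ℝ → Sym(n) be a smooth curve of real symmetric n×n matrices with Ṡ(t) invertible for every t, and let φ : ℝ → ℝ be smooth with φ̇(t) ≠ 0 for every t. Then the reparametrized curve t ↦ S(φ(t)) also has invertible derivative at every t, and its curvature satisfies the chain rule R_{S∘φ}(t) = φ̇(t)² · R_S(φ(t)) + (φ⃛(t)/(2φ̇(t)) − (3/4)(φ̈(t)/φ̇(t))²) · I, where the scalar coefficient is the Schwartzian derivative of φ at t. -/
open Matrix

/-- Entrywise derivative of a matrix-valued curve. -/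
noncomputable def matDeriv {n : ℕ} (S : ℝ → Matrix (Fin n) (Fin n) ℝ) :
    ℝ → Matrix (Fin n) (Fin n) ℝ :=
  fun t => Matrix.of fun i j => deriv (fun τ => S τ i j) t

namespace CurvAux

open scoped ContDiff

variable {n : ℕ}

/-- Entrywise "has derivative" predicate for matrix curves. -/
def HasMD (A : ℝ → Matrix (Fin n) (Fin n) ℝ) (t : ℝ) (A' : Matrix (Fin n) (Fin n) ℝ) : Prop :=
  ∀ i j, HasDerivAt (fun τ => A τ i j) (A' i j) t

lemma matDeriv_apply (A : ℝ → Matrix (Fin n) (Fin n) ℝ) (t : ℝ) (i j : Fin n) :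
    matDeriv A t i j = deriv (fun τ => A τ i j) t := rfl

lemma HasMD.matDeriv_eq {A : ℝ → Matrix (Fin n) (Fin n) ℝ} {t : ℝ}
    {A' : Matrix (Fin n) (Fin n) ℝ} (h : HasMD A t A') : matDeriv A t = A' := by
  ext i j; exact (h i j).deriv

/-- Entrywise smoothness. -/
def Smooth (A : ℝ → Matrix (Fin n) (Fin n) ℝ) : Prop :=
  ∀ i j, ContDiff ℝ ∞ fun τ => A τ i j

lemma Smooth.matDerivSmooth {A : ℝ → Matrix (Fin n) (Fin n) ℝ} (h : Smooth A) :
    Smooth (_root_.matDeriv A) := fun i j =>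
  (contDiff_infty_iff_deriv.mp (h i j)).2

lemma Smooth.hasMD {A : ℝ → Matrix (Fin n) (Fin n) ℝ} (h : Smooth A) (t : ℝ) :
    HasMD A t (matDeriv A t) := fun i j =>
  (((h i j).differentiable (by simp)) t).hasDerivAt

lemma HasMD.add {A B : ℝ → Matrix (Fin n) (Fin n) ℝ} {t : ℝ}
    {A' B' : Matrix (Fin n) (Fin n) ℝ} (hA : HasMD A t A') (hB : HasMD B t B') :
    HasMD (fun τ => A τ + B τ) t (A' + B') := fun i j => by
  simpa [Matrix.add_apply] using (hA i j).fun_add (hB i j)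

lemma HasMD.mul {A B : ℝ → Matrix (Fin n) (Fin n) ℝ} {t : ℝ}
    {A' B' : Matrix (Fin n) (Fin n) ℝ} (hA : HasMD A t A') (hB : HasMD B t B') :
    HasMD (fun τ => A τ * B τ) t (A' * B t + A t * B') := by
  intro i j
  simp only [Matrix.mul_apply, Matrix.add_apply]
  rw [← Finset.sum_add_distrib]
  exact HasDerivAt.fun_sum fun k _ => (hA i k).fun_mul (hB k j)

lemma HasMD.smulFun {c : ℝ → ℝ} {c' : ℝ} {A : ℝ → Matrix (Fin n) (Fin n) ℝ} {t : ℝ}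
    {A' : Matrix (Fin n) (Fin n) ℝ} (hc : HasDerivAt c c' t) (hA : HasMD A t A') :
    HasMD (fun τ => c τ • A τ) t (c' • A t + c t • A') := fun i j => by
  simpa [Matrix.smul_apply, Matrix.add_apply, smul_eq_mul] using hc.fun_mul (hA i j)

lemma hasMD_const (C : Matrix (Fin n) (Fin n) ℝ) (t : ℝ) :
    HasMD (fun _ => C) t 0 := fun i j => by
  simpa using hasDerivAt_const t (C i j)

lemma HasMD.comp {A : ℝ → Matrix (Fin n) (Fin n) ℝ} {A' : Matrix (Fin n) (Fin n) ℝ}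
    {φ : ℝ → ℝ} {φ' t : ℝ} (hA : HasMD A (φ t) A') (hφ : HasDerivAt φ φ' t) :
    HasMD (fun τ => A (φ τ)) t (φ' • A') := fun i j => by
  simpa [Matrix.smul_apply, smul_eq_mul, mul_comm, Function.comp_def] using (hA i j).comp t hφ

lemma Smooth.det {A : ℝ → Matrix (Fin n) (Fin n) ℝ} (h : Smooth A) :
    ContDiff ℝ ∞ fun τ => (A τ).det := by
  simp only [Matrix.det_apply']
  apply ContDiff.sum
  intro σ _
  apply ContDiff.mul contDiff_const
  have : ∀ s : Finset (Fin n), ContDiff ℝ ∞ fun τ => ∏ i ∈ s, A τ (σ i) i := by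
    intro s
    induction s using Finset.induction with
    | empty => simpa using contDiff_const
    | insert _ _ hx ih =>
      simp only [Finset.prod_insert hx]
      exact (h _ _).mul ih
  exact this Finset.univ

lemma Smooth.mulMat {A B : ℝ → Matrix (Fin n) (Fin n) ℝ} (hA : Smooth A) (hB : Smooth B) :
    Smooth (fun τ => A τ * B τ) := by
  intro i j
  simp only [Matrix.mul_apply]
  exact ContDiff.sum fun k _ => (hA i k).mul (hB k j)

lemma Smooth.smulFun {c : ℝ → ℝ} {A : ℝ → Matrix (Fin n) (Fin n) ℝ}
    (hc : ContDiff ℝ ∞ c) (hA : Smooth A) : Smooth (fun τ => c τ • A τ) := by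
  intro i j
  simp only [Matrix.smul_apply, smul_eq_mul]
  exact hc.mul (hA i j)

lemma Smooth.invMat {A : ℝ → Matrix (Fin n) (Fin n) ℝ} (h : Smooth A)
    (hu : ∀ τ, IsUnit (A τ)) : Smooth (fun τ => (A τ)⁻¹) := by
  intro i j
  have hdet : ∀ τ, (A τ).det ≠ 0 := fun τ =>
    ((Matrix.isUnit_iff_isUnit_det _).mp (hu τ)).ne_zero
  have h1 : ContDiff ℝ ∞ fun τ => (A τ).det := h.det
  have h2 : ContDiff ℝ ∞ fun τ => (A τ).adjugate i j := by
    simp only [Matrix.adjugate_apply]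
    apply Smooth.det
    intro a b
    rcases eq_or_ne a j with rfl | hab
    · simpa [Matrix.updateRow_apply] using contDiff_const
    · simpa [Matrix.updateRow_apply, hab] using h a b
  have key : (fun τ => (A τ)⁻¹ i j) = fun τ => ((A τ).det)⁻¹ * (A τ).adjugate i j := by
    funext τ
    rw [Matrix.inv_def, Ring.inverse_eq_inv']
    simp [Matrix.smul_apply, smul_eq_mul]
  rw [key]
  exact (h1.inv hdet).mul h2

lemma smul_inv' (c : ℝ) (hc : c ≠ 0) (M : Matrix (Fin n) (Fin n) ℝ) (hM : IsUnit M) :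
    (c • M)⁻¹ = c⁻¹ • M⁻¹ := by
  apply Matrix.inv_eq_right_inv
  rw [Matrix.smul_mul, Matrix.mul_smul, smul_smul,
    Matrix.mul_nonsing_inv _ ((Matrix.isUnit_iff_isUnit_det _).mp hM),
    mul_inv_cancel₀ hc, one_smul]

lemma isUnit_smul' {c : ℝ} (hc : c ≠ 0) {M : Matrix (Fin n) (Fin n) ℝ} (hM : IsUnit M) :
    IsUnit (c • M) := by
  rw [Matrix.isUnit_iff_isUnit_det, Matrix.det_smul, isUnit_iff_ne_zero]
  exact mul_ne_zero (pow_ne_zero _ hc)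
    ((Matrix.isUnit_iff_isUnit_det M).mp hM).ne_zero

end CurvAux

/-- The curvature (matrix Schwarzian derivative) of a regular curve of symmetric matrices:
`R_S(t) = d/dt((2Ṡ)⁻¹S̈) − ((2Ṡ)⁻¹S̈)²`. -/
noncomputable def curvatureMat {n : ℕ} (S : ℝ → Matrix (Fin n) (Fin n) ℝ) :
    ℝ → Matrix (Fin n) (Fin n) ℝ :=
  fun t =>
    matDeriv (fun τ => ((2 : ℝ) • matDeriv S τ)⁻¹ * matDeriv (matDeriv S) τ) t
      - (((2 : ℝ) • matDeriv S t)⁻¹ * matDeriv (matDeriv S) t) ^ 2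

namespace CurvAux

/-- The "velocity-normalized acceleration" `A_S = (2Ṡ)⁻¹S̈`. -/
noncomputable def schwA {n : ℕ} (S : ℝ → Matrix (Fin n) (Fin n) ℝ) :
    ℝ → Matrix (Fin n) (Fin n) ℝ :=
  fun u => ((2 : ℝ) • matDeriv S u)⁻¹ * matDeriv (matDeriv S) u

lemma curvatureMat_eq {n : ℕ} (S : ℝ → Matrix (Fin n) (Fin n) ℝ) (t : ℝ) :
    curvatureMat S t = matDeriv (schwA S) t - (schwA S t) ^ 2 := rfl

end CurvAux

open CurvAux in
/-- **Chain rule for the curvature.**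
If `S` is a smooth regular curve of symmetric matrices and `φ` a smooth regular change of
variables, then `S ∘ φ` is regular and
`R_{S∘φ}(t) = φ̇(t)² R_S(φ(t)) + 𝕊φ(t)·I`, where `𝕊φ` is the Schwartzian derivative of `φ`. -/
theorem curvature_chain_rule
    (n : ℕ) (S : ℝ → Matrix (Fin n) (Fin n) ℝ)
    (hsymm : ∀ t, (S t).IsSymm)
    (hsmooth : ∀ i j, ContDiff ℝ (⊤ : ℕ∞) fun t => S t i j)
    (hreg : ∀ t, IsUnit (matDeriv S t))
    (φ : ℝ → ℝ) (hφ : ContDiff ℝ (⊤ : ℕ∞) φ) (hφ' : ∀ t, deriv φ t ≠ 0) :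
    (∀ t, IsUnit (matDeriv (fun τ => S (φ τ)) t)) ∧
    ∀ t, curvatureMat (fun τ => S (φ τ)) t
        = (deriv φ t) ^ 2 • curvatureMat S (φ t)
          + (deriv (deriv (deriv φ)) t / (2 * deriv φ t)
              - (3 / 4) * (deriv (deriv φ) t / deriv φ t) ^ 2)
            • (1 : Matrix (Fin n) (Fin n) ℝ) := by
  open scoped ContDiff in
  have hone : (∞ : WithTop ℕ∞) ≠ 0 := by simp
  have hS : Smooth S := fun i j => (hsmooth i j).of_le (by simp)
  have hS1 : Smooth (matDeriv S) := hS.matDerivSmooth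
  have hS2 : Smooth (matDeriv (matDeriv S)) := hS1.matDerivSmooth
  have hφ0 : ContDiff ℝ ∞ φ := hφ.of_le (by simp)
  have hφ1 : ContDiff ℝ ∞ (deriv φ) := (contDiff_infty_iff_deriv.mp hφ0).2
  have hφ2 : ContDiff ℝ ∞ (deriv (deriv φ)) := (contDiff_infty_iff_deriv.mp hφ1).2
  have hφat : ∀ t, HasDerivAt φ (deriv φ t) t := fun t =>
    ((hφ0.differentiable hone) t).hasDerivAt
  have hφ'at : ∀ t, HasDerivAt (deriv φ) (deriv (deriv φ) t) t := fun t =>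
    ((hφ1.differentiable hone) t).hasDerivAt
  have hφ''at : ∀ t, HasDerivAt (deriv (deriv φ)) (deriv (deriv (deriv φ)) t) t := fun t =>
    ((hφ2.differentiable hone) t).hasDerivAt
  -- first derivative of the reparametrized curve
  have key1 : ∀ t, matDeriv (fun τ => S (φ τ)) t = deriv φ t • matDeriv S (φ t) := fun t =>
    ((hS.hasMD (φ t)).comp (hφat t)).matDeriv_eq
  have hunit : ∀ t, IsUnit (matDeriv (fun τ => S (φ τ)) t) := fun t => by
    rw [key1 t]; exact isUnit_smul' (hφ' t) (hreg (φ t))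
  refine ⟨hunit, fun t => ?_⟩
  -- second derivative of the reparametrized curve
  have key2 : ∀ t, matDeriv (matDeriv (fun τ => S (φ τ))) t
      = deriv (deriv φ) t • matDeriv S (φ t)
        + deriv φ t • (deriv φ t • matDeriv (matDeriv S) (φ t)) := by
    intro t
    have h : matDeriv (fun τ => S (φ τ)) = fun τ => deriv φ τ • matDeriv S (φ τ) :=
      funext key1
    rw [h]
    exact (HasMD.smulFun (hφ'at t) ((hS1.hasMD (φ t)).comp (hφat t))).matDeriv_eq
  -- smoothness and regularity facts
  have unit2S1 : ∀ u, IsUnit ((2 : ℝ) • matDeriv S u) := fun u =>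
    isUnit_smul' two_ne_zero (hreg u)
  have hAS : Smooth (schwA S) :=
    Smooth.mulMat (Smooth.invMat (Smooth.smulFun contDiff_const hS1) unit2S1) hS2
  have hdetS1 : ∀ u, IsUnit (matDeriv S u).det := fun u =>
    (Matrix.isUnit_iff_isUnit_det _).mp (hreg u)
  -- the normalized acceleration of the reparametrized curve
  have key3 : ∀ t, ((2 : ℝ) • matDeriv (fun τ => S (φ τ)) t)⁻¹
        * matDeriv (matDeriv (fun τ => S (φ τ))) t
      = (deriv (deriv φ) t / (2 * deriv φ t)) • (1 : Matrix (Fin n) (Fin n) ℝ)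
        + deriv φ t • schwA S (φ t) := by
    intro t
    have hp := hφ' t
    rw [key1 t, key2 t, smul_smul,
      smul_inv' _ (mul_ne_zero two_ne_zero hp) _ (hreg (φ t))]
    have hAS2 : schwA S (φ t)
        = (2 : ℝ)⁻¹ • ((matDeriv S (φ t))⁻¹ * matDeriv (matDeriv S) (φ t)) := by
      rw [schwA, smul_inv' _ two_ne_zero _ (hreg (φ t)), Matrix.smul_mul]
    rw [hAS2]
    simp only [Matrix.smul_mul, Matrix.mul_add, Matrix.mul_smul, smul_smul,
      Matrix.nonsing_inv_mul _ (hdetS1 (φ t))]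
    have e1 : deriv (deriv φ) t * (2 * deriv φ t)⁻¹
        = deriv (deriv φ) t / (2 * deriv φ t) := by ring
    have e2 : deriv φ t * deriv φ t * (2 * deriv φ t)⁻¹
        = deriv φ t * 2⁻¹ := by field_simp
    rw [e1, e2]
  -- differentiate the normalized acceleration
  have funAT : (fun τ => ((2 : ℝ) • matDeriv (fun τ' => S (φ τ')) τ)⁻¹
        * matDeriv (matDeriv (fun τ' => S (φ τ'))) τ)
      = fun τ => (deriv (deriv φ) τ / (2 * deriv φ τ)) • (1 : Matrix (Fin n) (Fin n) ℝ)
        + deriv φ τ • schwA S (φ τ) := funext key3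
  have haat : HasDerivAt (fun τ => deriv (deriv φ) τ / (2 * deriv φ τ))
      ((deriv (deriv (deriv φ)) t * (2 * deriv φ t)
        - deriv (deriv φ) t * (2 * deriv (deriv φ) t)) / (2 * deriv φ t) ^ 2) t :=
    (hφ''at t).div ((hφ'at t).const_mul 2) (by
      exact mul_ne_zero two_ne_zero (hφ' t))
  have hD : HasMD (fun τ => (deriv (deriv φ) τ / (2 * deriv φ τ)) •
        (1 : Matrix (Fin n) (Fin n) ℝ) + deriv φ τ • schwA S (φ τ)) t
      (((deriv (deriv (deriv φ)) t * (2 * deriv φ t)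
          - deriv (deriv φ) t * (2 * deriv (deriv φ) t)) / (2 * deriv φ t) ^ 2) • 1
        + (deriv (deriv φ) t / (2 * deriv φ t)) • 0
        + (deriv (deriv φ) t • schwA S (φ t)
          + deriv φ t • (deriv φ t • matDeriv (schwA S) (φ t)))) :=
    (HasMD.smulFun haat (hasMD_const 1 t)).add
      (HasMD.smulFun (hφ'at t) ((hAS.hasMD (φ t)).comp (hφat t)))
  -- assemble
  rw [curvatureMat_eq, curvatureMat_eq]
  rw [show matDeriv (schwA (fun τ => S (φ τ))) t
      = matDeriv (fun τ => ((2 : ℝ) • matDeriv (fun τ' => S (φ τ')) τ)⁻¹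
          * matDeriv (matDeriv (fun τ' => S (φ τ'))) τ) t from rfl,
    funAT, hD.matDeriv_eq,
    show schwA (fun τ => S (φ τ)) t
      = ((2 : ℝ) • matDeriv (fun τ' => S (φ τ')) t)⁻¹
          * matDeriv (matDeriv (fun τ' => S (φ τ'))) t from rfl,
    key3 t]
  -- now a pure algebraic identity
  set p := deriv φ t with hp'
  set q := deriv (deriv φ) t
  set r := deriv (deriv (deriv φ)) t
  set B := schwA S (φ t)
  set B' := matDeriv (schwA S) (φ t)
  have hp : p ≠ 0 := hφ' t
  have e1 : (r * (2 * p) - q * (2 * q)) / (2 * p) ^ 2 - (q / (2 * p)) * (q / (2 * p))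
      = r / (2 * p) - 3 / 4 * (q / p) ^ 2 := by
    field_simp
    ring
  have e2 : q - ((q / (2 * p)) * p + p * (q / (2 * p))) = 0 := by
    field_simp
    ring
  calc ((r * (2 * p) - q * (2 * q)) / (2 * p) ^ 2) • (1 : Matrix (Fin n) (Fin n) ℝ)
        + (q / (2 * p)) • 0 + (q • B + p • (p • B'))
        - ((q / (2 * p)) • 1 + p • B) ^ 2
      = ((r * (2 * p) - q * (2 * q)) / (2 * p) ^ 2
          - (q / (2 * p)) * (q / (2 * p))) • (1 : Matrix (Fin n) (Fin n) ℝ)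
        + (q - ((q / (2 * p)) * p + p * (q / (2 * p)))) • B
        + (p ^ 2) • (B' - B * B) := by
        simp only [sq, add_mul, mul_add, smul_mul_assoc, mul_smul_comm, one_mul,
          mul_one, smul_smul, smul_zero, add_zero]
        module
    _ = (p ^ 2) • (B' - B ^ 2)
        + (r / (2 * p) - 3 / 4 * (q / p) ^ 2) • (1 : Matrix (Fin n) (Fin n) ℝ) := by
        rw [e2, e1, zero_smul, add_zero, sq B]
        abel
end

section
/- Let S : ℝ → Sym(n) be a smooth curve of real symmetric n×n matrices with Ṡ(t) invertible for every t, and set A(t) = −½ Ṡ(t)⁻¹ S̈(t) Ṡ(t)⁻¹, so that the derivative curve of v(t) = {(x, S(t)x) : x ∈ ℝⁿ} is v°(t) = {(A(t)y, y + S(t)A(t)y) : y ∈ ℝⁿ}. Let x : ℝ → ℝⁿ be smooth and e(t) = (x(t), S(t)x(t)) ∈ ℝⁿ × ℝⁿ, a smooth curve with e(t) ∈ v(t) for all t. Then for each t, ė(t) ∈ v°(t) if and only if ë(t) ∈ v(t); both are equivalent to ẋ(t) = −½ Ṡ(t)⁻¹ S̈(t) x(t). -/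
open Matrix

lemma hasDerivAt_mulVec' {n : ℕ} {S : ℝ → Matrix (Fin n) (Fin n) ℝ}
    {S' : Matrix (Fin n) (Fin n) ℝ} {x : ℝ → Fin n → ℝ} {x' : Fin n → ℝ} {t : ℝ}
    (hS : ∀ i j, HasDerivAt (fun τ => S τ i j) (S' i j) t)
    (hx : ∀ j, HasDerivAt (fun τ => x τ j) (x' j) t) :
    HasDerivAt (fun τ => S τ *ᵥ x τ) (S' *ᵥ x t + S t *ᵥ x') t := by
  rw [hasDerivAt_pi]
  intro i
  have h : HasDerivAt (fun τ => ∑ j, S τ i j * x τ j)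
      (∑ j, (S' i j * x t j + S t i j * x' j)) t :=
    HasDerivAt.fun_sum fun j _ => (hS i j).mul (hx j)
  simpa [mulVec, dotProduct, Finset.sum_add_distrib] using h

lemma contDiff_top_deriv' {F : Type*} [NormedAddCommGroup F] [NormedSpace ℝ F]
    {f : ℝ → F} (h : ContDiff ℝ (⊤ : ℕ∞) f) : ContDiff ℝ (⊤ : ℕ∞) (deriv f) := by
  have h' : ContDiff ℝ (((⊤ : ℕ∞) : WithTop ℕ∞) + 1) f := by
    rw [← WithTop.coe_one, ← WithTop.coe_add, top_add]; exact h
  exact (contDiff_succ_iff_deriv.mp h').2.2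

/-- **Characterization of the derivative curve and the structural equation.**
Let `v(t) = {(x, S(t)x)}` be a regular curve with derivative curve
`v°(t) = {(A(t)y, y + S(t)A(t)y)}`, `A(t) = −½Ṡ(t)⁻¹S̈(t)Ṡ(t)⁻¹`, and let
`e(t) = (x(t), S(t)x(t)) ∈ v(t)`.  Then `ė(t) ∈ v°(t) ↔ ë(t) ∈ v(t)`, both being
equivalent to `ẋ(t) = −½Ṡ(t)⁻¹S̈(t)x(t)`. -/
theorem derivative_curve_structural_equation
    (n : ℕ) (S : ℝ → Matrix (Fin n) (Fin n) ℝ)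
    (hsymm : ∀ t, (S t).IsSymm)
    (hsmooth : ∀ i j, ContDiff ℝ (⊤ : ℕ∞) fun t => S t i j)
    (hreg : ∀ t, IsUnit (matDeriv S t))
    (x : ℝ → Fin n → ℝ) (hx : ContDiff ℝ (⊤ : ℕ∞) x)
    (e : ℝ → (Fin n → ℝ) × (Fin n → ℝ))
    (he : e = fun t => (x t, S t *ᵥ x t))
    (A : ℝ → Matrix (Fin n) (Fin n) ℝ)
    (hA : A = fun t =>
      (-(1 / 2 : ℝ)) • ((matDeriv S t)⁻¹ * matDeriv (matDeriv S) t * (matDeriv S t)⁻¹))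
    (t : ℝ) :
    ((∃ y : Fin n → ℝ, deriv e t = (A t *ᵥ y, y + S t *ᵥ (A t *ᵥ y))) ↔
        deriv x t = (-(1 / 2 : ℝ)) • ((matDeriv S t)⁻¹ *ᵥ (matDeriv (matDeriv S) t *ᵥ x t)))
    ∧ (((deriv (deriv e) t).2 = S t *ᵥ (deriv (deriv e) t).1) ↔
        deriv x t = (-(1 / 2 : ℝ)) • ((matDeriv S t)⁻¹ *ᵥ (matDeriv (matDeriv S) t *ᵥ x t))) := by
  -- notation
  set Sd := matDeriv S with hSddef
  set Sdd := matDeriv Sd with hSdddef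
  set x1 : ℝ → Fin n → ℝ := deriv x with hx1def
  -- smoothness of entries of Sd
  have hSdsmooth : ∀ i j, ContDiff ℝ (⊤ : ℕ∞) fun τ => Sd τ i j := by
    intro i j
    have : (fun τ => Sd τ i j) = deriv (fun τ => S τ i j) := by
      funext τ; simp [hSddef, matDeriv]
    rw [this]
    exact contDiff_top_deriv' (hsmooth i j)
  -- pointwise derivatives of entries
  have hSderiv : ∀ (s : ℝ) i j, HasDerivAt (fun τ => S τ i j) (Sd s i j) s := by
    intro s i j
    exact ((hsmooth i j).differentiable (by simp) s).hasDerivAt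
  have hSdderiv : ∀ (s : ℝ) i j, HasDerivAt (fun τ => Sd τ i j) (Sdd s i j) s := by
    intro s i j
    exact ((hSdsmooth i j).differentiable (by simp) s).hasDerivAt
  -- derivatives of x
  have hx1smooth : ContDiff ℝ (⊤ : ℕ∞) x1 := contDiff_top_deriv' hx
  have hxD : ∀ s : ℝ, HasDerivAt x (x1 s) s := fun s =>
    ((hx.differentiable (by simp)) s).hasDerivAt
  have hx1D : ∀ s : ℝ, HasDerivAt x1 (deriv x1 s) s := fun s =>
    ((hx1smooth.differentiable (by simp)) s).hasDerivAt
  have hxDc : ∀ (s : ℝ) j, HasDerivAt (fun τ => x τ j) (x1 s j) s := fun s =>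
    hasDerivAt_pi.mp (hxD s)
  have hx1Dc : ∀ (s : ℝ) j, HasDerivAt (fun τ => x1 τ j) (deriv x1 s j) s := fun s =>
    hasDerivAt_pi.mp (hx1D s)
  -- first derivative of e
  have heD : ∀ s : ℝ, HasDerivAt e (x1 s, Sd s *ᵥ x s + S s *ᵥ x1 s) s := by
    intro s
    rw [he]
    exact (hxD s).prodMk (hasDerivAt_mulVec' (hSderiv s) (hxDc s))
  have hde : deriv e = fun s => (x1 s, Sd s *ᵥ x s + S s *ᵥ x1 s) := by
    funext s; exact (heD s).deriv
  -- second derivative of e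
  have heDD : HasDerivAt (deriv e)
      (deriv x1 t,
        (Sdd t *ᵥ x t + Sd t *ᵥ x1 t) + (Sd t *ᵥ x1 t + S t *ᵥ deriv x1 t)) t := by
    rw [hde]
    exact (hx1D t).prodMk
      ((hasDerivAt_mulVec' (hSdderiv t) (hxDc t)).add
        (hasDerivAt_mulVec' (hSderiv t) (hx1Dc t)))
  have hdde : deriv (deriv e) t =
      (deriv x1 t,
        (Sdd t *ᵥ x t + Sd t *ᵥ x1 t) + (Sd t *ᵥ x1 t + S t *ᵥ deriv x1 t)) := heDD.deriv
  -- matrix algebra facts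
  have hdet : IsUnit (Sd t).det := (isUnit_iff_isUnit_det _).mp (hreg t)
  have hBD : (Sd t)⁻¹ * Sd t = 1 := nonsing_inv_mul _ hdet
  have hDB : Sd t * (Sd t)⁻¹ = 1 := mul_nonsing_inv _ hdet
  have hAS : A t * Sd t = (-(1 / 2 : ℝ)) • ((Sd t)⁻¹ * Sdd t) := by
    rw [hA]
    rw [smul_mul_assoc, mul_assoc ((Sd t)⁻¹ * Sdd t), hBD, mul_one]
  have hAapp : ∀ y : Fin n → ℝ, A t *ᵥ (Sd t *ᵥ y) =
      (-(1 / 2 : ℝ)) • ((Sd t)⁻¹ *ᵥ (Sdd t *ᵥ y)) := by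
    intro y
    rw [mulVec_mulVec, mulVec_mulVec, hAS, smul_mulVec]
  constructor
  · -- first equivalence
    constructor
    · rintro ⟨y, hy⟩
      rw [hde] at hy
      have h1 : x1 t = A t *ᵥ y := congrArg Prod.fst hy
      have h2 : Sd t *ᵥ x t + S t *ᵥ x1 t = y + S t *ᵥ (A t *ᵥ y) :=
        congrArg Prod.snd hy
      rw [h1] at h2
      have hy' : y = Sd t *ᵥ x t := (add_right_cancel h2).symm
      rw [hy'] at h1
      rw [h1, hAapp]
    · intro h
      refine ⟨Sd t *ᵥ x t, ?_⟩
      rw [hde]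
      have h1 : A t *ᵥ (Sd t *ᵥ x t) = x1 t := by rw [hAapp]; exact h.symm
      rw [h1]
    -- done
  · -- second equivalence
    rw [hdde]
    simp only
    constructor
    · intro h
      have hhalf : Sd t *ᵥ x1 t = (-(1 / 2 : ℝ)) • (Sdd t *ᵥ x t) := by
        funext i
        have hc := congrFun h i
        simp only [Pi.add_apply, Pi.smul_apply, smul_eq_mul] at hc ⊢
        linarith
      have hinv : (Sd t)⁻¹ *ᵥ (Sd t *ᵥ x1 t) = x1 t := by
        rw [mulVec_mulVec, hBD, one_mulVec]
      rw [← hinv, hhalf, mulVec_smul]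
    · intro h
      have hDx1 : Sd t *ᵥ x1 t = (-(1 / 2 : ℝ)) • (Sdd t *ᵥ x t) := by
        rw [h, mulVec_smul, mulVec_mulVec, hDB, one_mulVec]
      rw [hDx1]
      funext i
      simp only [Pi.add_apply, Pi.smul_apply, smul_eq_mul]
      ring
end

section
/- Let t₀ ≤ t₁ and let S : [t₀, t₁] → Sym(n) be a family of real symmetric n×n matrices such that S(t₀) = 0 and, for every y ∈ ℝⁿ, the scalar function τ ↦ yᵀS(τ)y is nondecreasing on [t₀, t₁]. Then for every t ∈ [t₀, t₁] and every τ ∈ [t₀, t], ker S(t) ⊆ ker S(τ); equivalently, ker S(t) = ⋂_{τ ∈ [t₀,t]} ker S(τ). -/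
open Matrix Set

/-- **Kernels of a monotone family of symmetric matrices are nested.**
If `S : [t₀,t₁] → Sym(n)` satisfies `S(t₀) = 0` and `τ ↦ yᵀS(τ)y` is nondecreasing for
every `y`, then `ker S(t) ⊆ ker S(τ)` for `t₀ ≤ τ ≤ t ≤ t₁`; equivalently
`ker S(t) = ⋂_{τ ∈ [t₀,t]} ker S(τ)`. -/
theorem monotone_family_kernels_nested
    (n : ℕ) (t₀ t₁ : ℝ) (ht : t₀ ≤ t₁)
    (S : ℝ → Matrix (Fin n) (Fin n) ℝ)
    (hsymm : ∀ t ∈ Icc t₀ t₁, (S t).IsSymm)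
    (h0 : S t₀ = 0)
    (hmono : ∀ y : Fin n → ℝ, MonotoneOn (fun τ => y ⬝ᵥ (S τ *ᵥ y)) (Icc t₀ t₁)) :
    ∀ t ∈ Icc t₀ t₁, ∀ τ ∈ Icc t₀ t, ∀ y : Fin n → ℝ,
      S t *ᵥ y = 0 → S τ *ᵥ y = 0 := by
  intro t htm τ hτ y hy
  have ht0 : t₀ ∈ Icc t₀ t₁ := ⟨le_refl _, ht⟩
  have hτm : τ ∈ Icc t₀ t₁ := ⟨hτ.1, hτ.2.trans htm.2⟩
  have hnonneg : ∀ x : Fin n → ℝ, 0 ≤ x ⬝ᵥ (S τ *ᵥ x) := by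
    intro x
    have := hmono x ht0 hτm hτ.1
    simpa [h0] using this
  have hpsd : (S τ).PosSemidef := by
    refine Matrix.posSemidef_iff_dotProduct_mulVec.mpr ⟨?_, fun x => by simpa using hnonneg x⟩
    have := hsymm τ hτm
    simpa [Matrix.IsHermitian, Matrix.IsSymm] using this
  have hle : y ⬝ᵥ (S τ *ᵥ y) ≤ y ⬝ᵥ (S t *ᵥ y) := hmono y hτm htm hτ.2
  have hzero : y ⬝ᵥ (S τ *ᵥ y) = 0 :=
    le_antisymm (by simpa [hy] using hle) (hnonneg y)
  have := (hpsd.dotProduct_mulVec_zero_iff y).mp (by simpa using hzero)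
  simpa using this
end

section
/- Let S : [t₀, t₁] → Sym(n) be a continuously differentiable family of real symmetric n×n matrices such that Ṡ(t) is positive definite for every t ∈ [t₀, t₁]. Then the set {t ∈ [t₀, t₁] : det S(t) = 0} is finite. -/
open Matrix Set


private lemma mulVec_norm_le' {n : ℕ} (A : Matrix (Fin n) (Fin n) ℝ) (x : Fin n → ℝ) :
    ‖A *ᵥ x‖ ≤ (∑ i, ∑ j, |A i j|) * ‖x‖ := by
  have hnn : 0 ≤ (∑ i, ∑ j, |A i j|) * ‖x‖ := by positivity
  rw [pi_norm_le_iff_of_nonneg hnn]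
  intro i
  have h1 : ‖(A *ᵥ x) i‖ = |∑ j, A i j * x j| := by
    simp [Matrix.mulVec, dotProduct, Real.norm_eq_abs]
  rw [h1]
  calc |∑ j, A i j * x j| ≤ ∑ j, |A i j * x j| := Finset.abs_sum_le_sum_abs _ _
    _ ≤ ∑ j, |A i j| * ‖x‖ := by
        refine Finset.sum_le_sum fun j _ => ?_
        rw [abs_mul]
        exact mul_le_mul_of_nonneg_left (norm_le_pi_norm x j) (abs_nonneg _)
    _ = (∑ j, |A i j|) * ‖x‖ := by rw [Finset.sum_mul]
    _ ≤ (∑ i, ∑ j, |A i j|) * ‖x‖ := by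
        refine mul_le_mul_of_nonneg_right ?_ (norm_nonneg _)
        exact Finset.single_le_sum (f := fun k => ∑ j, |A k j|) (fun k _ => Finset.sum_nonneg fun j _ => abs_nonneg _)
          (Finset.mem_univ i)

private lemma abs_dot_le' {n : ℕ} (x y : Fin n → ℝ) : |x ⬝ᵥ y| ≤ n * ‖x‖ * ‖y‖ := by
  calc |∑ i, x i * y i| ≤ ∑ i, |x i * y i| := Finset.abs_sum_le_sum_abs _ _
    _ ≤ ∑ _i : Fin n, ‖x‖ * ‖y‖ := by
        refine Finset.sum_le_sum fun i _ => ?_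
        rw [abs_mul]
        exact mul_le_mul (norm_le_pi_norm x i) (norm_le_pi_norm y i) (abs_nonneg _) (norm_nonneg _)
    _ = n * ‖x‖ * ‖y‖ := by
        rw [Finset.sum_const, Finset.card_univ, Fintype.card_fin, nsmul_eq_mul, mul_assoc]

private lemma gap_lemma {n : ℕ} (A : Matrix (Fin n) (Fin n) ℝ)
    (W : Submodule ℝ (Fin n → ℝ)) (hdisj : Disjoint (LinearMap.ker A.mulVecLin) W) :
    ∃ γ > 0, ∀ b ∈ W, γ * ‖b‖ ≤ ‖A *ᵥ b‖ := by
  classical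
  set SP : Set (Fin n → ℝ) := Metric.sphere (0 : Fin n → ℝ) 1 ∩ (W : Set (Fin n → ℝ)) with hSP
  have hsmem : ∀ b ∈ W, b ≠ 0 → (‖b‖⁻¹ • b) ∈ SP := by
    intro b hb hb0
    refine ⟨?_, W.smul_mem _ hb⟩
    rw [mem_sphere_zero_iff_norm, norm_smul, norm_inv, norm_norm,
      inv_mul_cancel₀ (norm_ne_zero_iff.mpr hb0)]
  rcases SP.eq_empty_or_nonempty with hSPe | hSPne
  · refine ⟨1, one_pos, fun b hb => ?_⟩
    by_cases hb0 : b = 0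
    · simp [hb0]
    · exact absurd (hsmem b hb hb0) (by simp [hSPe])
  · have hcomp : IsCompact SP :=
      (isCompact_sphere (0 : Fin n → ℝ) 1).inter_right W.closed_of_finiteDimensional
    have hcont : ContinuousOn (fun b => ‖A *ᵥ b‖) SP := by
      have : Continuous fun b : Fin n → ℝ => A *ᵥ b := by
        have := A.mulVecLin.continuous_of_finiteDimensional
        exact this
      exact this.norm.continuousOn
    obtain ⟨b₀, hb₀, hmin⟩ := hcomp.exists_isMinOn hSPne hcont
    have hb₀ne : A *ᵥ b₀ ≠ 0 := by
      intro h0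
      have hker : b₀ ∈ LinearMap.ker A.mulVecLin := by
        simpa [LinearMap.mem_ker, Matrix.mulVecLin_apply] using h0
      have hz : b₀ = 0 := (Submodule.disjoint_def.mp hdisj) b₀ hker hb₀.2
      have h1 : ‖b₀‖ = 1 := mem_sphere_zero_iff_norm.mp hb₀.1
      rw [hz] at h1; simp at h1
    refine ⟨‖A *ᵥ b₀‖, norm_pos_iff.mpr hb₀ne, fun b hb => ?_⟩
    by_cases hb0 : b = 0
    · simp [hb0]
    · have hle : ‖A *ᵥ b₀‖ ≤ ‖A *ᵥ (‖b‖⁻¹ • b)‖ := isMinOn_iff.mp hmin _ (hsmem b hb hb0)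
      simp only [Matrix.mulVec_smul, norm_smul, norm_inv, norm_norm] at hle
      have hbpos : (0:ℝ) < ‖b‖ := norm_pos_iff.mpr hb0
      calc ‖A *ᵥ b₀‖ * ‖b‖ ≤ (‖b‖⁻¹ * ‖A *ᵥ b‖) * ‖b‖ :=
            mul_le_mul_of_nonneg_right hle (norm_nonneg _)
        _ = ‖A *ᵥ b‖ := by field_simp

private lemma dot_mulVec_eq {n : ℕ} (v : Fin n → ℝ) (A : Matrix (Fin n) (Fin n) ℝ) :
    v ⬝ᵥ (A *ᵥ v) = ∑ i, ∑ j, v i * A i j * v j := by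
  simp [dotProduct, Matrix.mulVec, Finset.mul_sum, mul_assoc]

private lemma mvt_lower {t₀ t₁ : ℝ} {f f' : ℝ → ℝ} {c : ℝ}
    (hd : ∀ τ ∈ Icc t₀ t₁, HasDerivWithinAt f (f' τ) (Icc t₀ t₁) τ)
    (hc : ∀ τ ∈ Icc t₀ t₁, c ≤ f' τ)
    {a b : ℝ} (ha : a ∈ Icc t₀ t₁) (hb : b ∈ Icc t₀ t₁) (hab : a ≤ b) :
    c * (b - a) ≤ f b - f a := by
  have hF : ∀ τ ∈ Icc t₀ t₁,
      HasDerivWithinAt (fun τ => f τ - c * τ) (f' τ - c) (Icc t₀ t₁) τ := by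
    intro τ hτ
    have hid : HasDerivWithinAt (fun x : ℝ => c * x) c (Icc t₀ t₁) τ := by
      simpa using (hasDerivWithinAt_id τ (Icc t₀ t₁)).const_mul c
    exact (hd τ hτ).sub hid
  have hmono : MonotoneOn (fun τ => f τ - c * τ) (Icc t₀ t₁) := by
    apply monotoneOn_of_hasDerivWithinAt_nonneg (convex_Icc t₀ t₁)
    · exact fun τ hτ => (hF τ hτ).continuousWithinAt
    · exact fun τ hτ => (hF τ (interior_subset hτ)).mono interior_subset
    · intro τ hτ
      have := hc τ (interior_subset hτ); linarith
  have h2 := hmono ha hb hab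
  simp only at h2
  linarith

private lemma quad_deriv {n : ℕ} {t₀ t₁ : ℝ} {S S' : ℝ → Matrix (Fin n) (Fin n) ℝ}
    (hderiv : ∀ t ∈ Icc t₀ t₁, ∀ i j,
      HasDerivWithinAt (fun τ => S τ i j) (S' t i j) (Icc t₀ t₁) t)
    (v : Fin n → ℝ) (t : ℝ) (ht : t ∈ Icc t₀ t₁) :
    HasDerivWithinAt (fun τ => v ⬝ᵥ (S τ *ᵥ v)) (v ⬝ᵥ (S' t *ᵥ v)) (Icc t₀ t₁) t := by
  have h1 : HasDerivWithinAt (fun τ => ∑ i, ∑ j, v i * S τ i j * v j)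
      (∑ i, ∑ j, v i * S' t i j * v j) (Icc t₀ t₁) t := by
    apply HasDerivWithinAt.fun_sum
    intro i _
    apply HasDerivWithinAt.fun_sum
    intro j _
    exact ((hderiv t ht i j).const_mul (v i)).mul_const (v j)
  have hfun : (fun τ => v ⬝ᵥ (S τ *ᵥ v)) = fun τ => ∑ i, ∑ j, v i * S τ i j * v j :=
    funext fun τ => dot_mulVec_eq v (S τ)
  rw [hfun, dot_mulVec_eq v (S' t)]
  exact h1


/-- **A regular monotone increasing curve meets the train only finitely often.**
If `S : [t₀,t₁] → Sym(n)` is continuously differentiable with `Ṡ(t)` positive definite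
for every `t ∈ [t₀,t₁]`, then `{t ∈ [t₀,t₁] : det S(t) = 0}` is finite. -/
theorem degeneracy_points_finite
    (n : ℕ) (t₀ t₁ : ℝ)
    (S S' : ℝ → Matrix (Fin n) (Fin n) ℝ)
    (hsymm : ∀ t ∈ Icc t₀ t₁, (S t).IsSymm)
    (hderiv : ∀ t ∈ Icc t₀ t₁, ∀ i j,
      HasDerivWithinAt (fun τ => S τ i j) (S' t i j) (Icc t₀ t₁) t)
    (hcont : ∀ i j, ContinuousOn (fun t => S' t i j) (Icc t₀ t₁))
    (hpos : ∀ t ∈ Icc t₀ t₁, (S' t).PosDef) :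
    {t ∈ Icc t₀ t₁ | (S t).det = 0}.Finite := by
  classical
  rcases Nat.eq_zero_or_pos n with hn0 | hn
  · subst hn0
    have he : {t ∈ Icc t₀ t₁ | (S t).det = 0} = ∅ := by
      ext t; simp [Matrix.det_isEmpty]
    rw [he]; exact finite_empty
  by_contra hfin
  have hZinf : {t ∈ Icc t₀ t₁ | (S t).det = 0}.Infinite := hfin
  have hZsub : {t ∈ Icc t₀ t₁ | (S t).det = 0} ⊆ Icc t₀ t₁ := fun t ht => ht.1
  -- extract a convergent subsequence of distinct degenerate times
  set e := hZinf.natEmbedding with he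
  have hu : ∀ k, (e k : ℝ) ∈ {t ∈ Icc t₀ t₁ | (S t).det = 0} := fun k => (e k).2
  obtain ⟨tstar, htstar, φ, hφ, hconv⟩ :=
    isCompact_Icc.tendsto_subseq (x := fun k => (e k : ℝ)) (fun k => hZsub (hu k))
  set w : ℕ → ℝ := fun k => (e (φ k) : ℝ) with hw
  have hwinj : Function.Injective w := by
    intro k l hkl
    exact hφ.injective (e.injective (Subtype.val_injective hkl))
  have hBfin : {k | w k = tstar}.Finite := by
    apply Set.Subsingleton.finite
    intro k hk l hl
    exact hwinj (hk.trans hl.symm)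
  obtain ⟨m, hm⟩ := hBfin.bddAbove
  set s : ℕ → ℝ := fun k => w (k + (m + 1)) with hs
  have hsZ : ∀ k, s k ∈ {t ∈ Icc t₀ t₁ | (S t).det = 0} := fun k => hu (φ (k + (m + 1)))
  have hsne : ∀ k, s k ≠ tstar := by
    intro k hk
    have : k + (m + 1) ≤ m := hm hk
    omega
  have hst : Filter.Tendsto s Filter.atTop (nhds tstar) :=
    hconv.comp (Filter.tendsto_add_atTop_nat (m + 1))
  -- unit kernel vectors
  have hker : ∀ k, ∃ v : Fin n → ℝ, ‖v‖ = 1 ∧ S (s k) *ᵥ v = 0 := by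
    intro k
    obtain ⟨v, hv0, hveq⟩ := (Matrix.exists_mulVec_eq_zero_iff).mpr (hsZ k).2
    refine ⟨‖v‖⁻¹ • v, ?_, ?_⟩
    · rw [norm_smul, norm_inv, norm_norm, inv_mul_cancel₀ (norm_ne_zero_iff.mpr hv0)]
    · rw [Matrix.mulVec_smul, hveq, smul_zero]
  choose v hvnorm hveq using hker
  have hsIcc : ∀ k, s k ∈ Icc t₀ t₁ := fun k => (hsZ k).1
  -- the constant c > 0 : uniform positivity of the derivative quadratic form
  have hKc : IsCompact ((Icc t₀ t₁) ×ˢ Metric.sphere (0 : Fin n → ℝ) 1) :=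
    isCompact_Icc.prod (isCompact_sphere _ _)
  have hKne : ((Icc t₀ t₁) ×ˢ Metric.sphere (0 : Fin n → ℝ) 1).Nonempty :=
    ⟨(tstar, v 0), htstar, mem_sphere_zero_iff_norm.mpr (hvnorm 0)⟩
  have hgc : ContinuousOn (fun p : ℝ × (Fin n → ℝ) => p.2 ⬝ᵥ (S' p.1 *ᵥ p.2))
      ((Icc t₀ t₁) ×ˢ Metric.sphere (0 : Fin n → ℝ) 1) := by
    have hrw : (fun p : ℝ × (Fin n → ℝ) => p.2 ⬝ᵥ (S' p.1 *ᵥ p.2))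
        = fun p => ∑ i, ∑ j, p.2 i * S' p.1 i j * p.2 j :=
      funext fun p => dot_mulVec_eq p.2 (S' p.1)
    rw [hrw]
    apply continuousOn_finset_sum
    intro i _
    apply continuousOn_finset_sum
    intro j _
    have h1 : ContinuousOn (fun p : ℝ × (Fin n → ℝ) => S' p.1 i j)
        ((Icc t₀ t₁) ×ˢ Metric.sphere (0 : Fin n → ℝ) 1) :=
      (hcont i j).comp continuous_fst.continuousOn (fun p hp => hp.1)
    exact (((continuous_apply i).comp continuous_snd).continuousOn.mul h1).mul
      ((continuous_apply j).comp continuous_snd).continuousOn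
  obtain ⟨p₀, hp₀, hminc⟩ := hKc.exists_isMinOn hKne hgc
  set c := p₀.2 ⬝ᵥ (S' p₀.1 *ᵥ p₀.2) with hcdef
  have hcpos : 0 < c := by
    have hne : p₀.2 ≠ 0 := by
      intro h0
      have := mem_sphere_zero_iff_norm.mp hp₀.2
      rw [h0] at this; simp at this
    have := (hpos p₀.1 hp₀.1).dotProduct_mulVec_pos hne
    simpa using this
  have hcle : ∀ τ ∈ Icc t₀ t₁, ∀ x : Fin n → ℝ, ‖x‖ = 1 → c ≤ x ⬝ᵥ (S' τ *ᵥ x) :=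
    fun τ hτ x hx => isMinOn_iff.mp hminc (τ, x) ⟨hτ, mem_sphere_zero_iff_norm.mpr hx⟩
  -- a bound M₁ > 0 on the entries of S'
  have hFc : ContinuousOn (fun τ => ∑ i, ∑ j, |S' τ i j|) (Icc t₀ t₁) := by
    apply continuousOn_finset_sum; intro i _
    apply continuousOn_finset_sum; intro j _
    exact (hcont i j).abs
  obtain ⟨M₀, hM₀⟩ := isCompact_Icc.exists_bound_of_continuousOn hFc
  set M₁ := M₀ + 1 with hM₁def
  have hM₀0 : 0 ≤ M₀ := by
    have h1 := hM₀ tstar htstar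
    have h2 : (0:ℝ) ≤ ∑ i, ∑ j, |S' tstar i j| :=
      Finset.sum_nonneg fun i _ => Finset.sum_nonneg fun j _ => abs_nonneg _
    rw [Real.norm_eq_abs, abs_of_nonneg h2] at h1
    linarith
  have hM₁pos : 0 < M₁ := by linarith
  have hM₁ : ∀ τ ∈ Icc t₀ t₁, ∀ i j, |S' τ i j| ≤ M₁ := by
    intro τ hτ i j
    have h1 := hM₀ τ hτ
    have h2 : (0:ℝ) ≤ ∑ i, ∑ j, |S' τ i j| :=
      Finset.sum_nonneg fun i _ => Finset.sum_nonneg fun j _ => abs_nonneg _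
    rw [Real.norm_eq_abs, abs_of_nonneg h2] at h1
    have h3 : |S' τ i j| ≤ ∑ j, |S' τ i j| :=
      Finset.single_le_sum (f := fun j => |S' τ i j|) (fun _ _ => abs_nonneg _)
        (Finset.mem_univ j)
    have h4 : (∑ j, |S' τ i j|) ≤ ∑ i, ∑ j, |S' τ i j| :=
      Finset.single_le_sum (f := fun i => ∑ j, |S' τ i j|)
        (fun _ _ => Finset.sum_nonneg fun _ _ => abs_nonneg _) (Finset.mem_univ i)
    linarith
  -- Lipschitz bound for entries of S
  have hLip : ∀ t ∈ Icc t₀ t₁, ∀ i j, |S t i j - S tstar i j| ≤ M₁ * |t - tstar| := by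
    intro t ht i j
    have h1 := Convex.norm_image_sub_le_of_norm_hasDerivWithin_le
      (f := fun τ => S τ i j) (f' := fun τ => S' τ i j) (C := M₁)
      (fun τ hτ => hderiv τ hτ i j)
      (fun τ hτ => by rw [Real.norm_eq_abs]; exact hM₁ τ hτ i j)
      (convex_Icc t₀ t₁) htstar ht
    simpa [Real.norm_eq_abs] using h1
  set CC := (n : ℝ) * n * M₁ with hCCdef
  have hCCpos : 0 < CC := by
    have : (0:ℝ) < n := Nat.cast_pos.mpr hn
    positivity
  -- entrywise sum Lipschitz bound
  have hSumLip : ∀ t ∈ Icc t₀ t₁,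
      (∑ i, ∑ j, |S tstar i j - S t i j|) ≤ CC * |t - tstar| := by
    intro t ht
    calc (∑ i, ∑ j, |S tstar i j - S t i j|)
        ≤ ∑ _i : Fin n, ∑ _j : Fin n, M₁ * |t - tstar| := by
          refine Finset.sum_le_sum fun i _ => Finset.sum_le_sum fun j _ => ?_
          rw [abs_sub_comm]
          exact hLip t ht i j
      _ = CC * |t - tstar| := by
          simp [Finset.sum_const, Finset.card_univ, hCCdef]
          ring
  -- orthogonal-style decomposition relative to ker (S tstar)
  set A := S tstar with hA
  obtain ⟨W, hWcompl⟩ := Submodule.exists_isCompl (LinearMap.ker A.mulVecLin)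
  obtain ⟨γ, hγpos, hgap⟩ := gap_lemma A W hWcompl.disjoint
  -- key inequality for each k
  have key : ∀ k, c * |s k - tstar| ≤ (n * CC * CC / γ) * |s k - tstar| ^ 2 := by
    intro k
    set t := s k with htdef
    set ε := |t - tstar| with hεdef
    have hεpos : 0 < ε := abs_pos.mpr (sub_ne_zero.mpr (hsne k))
    obtain ⟨a, b, ha, hb, hab⟩ :=
      Submodule.codisjoint_iff_exists_add_eq.mp hWcompl.codisjoint (v k)
    have hAa : A *ᵥ a = 0 := by
      have := LinearMap.mem_ker.mp ha
      rwa [Matrix.mulVecLin_apply] at this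
    have hAv : A *ᵥ v k = A *ᵥ b := by
      rw [← hab, Matrix.mulVec_add, hAa, zero_add]
    -- bound on ‖A *ᵥ b‖
    have hAvb : ‖A *ᵥ b‖ ≤ CC * ε := by
      have h1 : A *ᵥ v k = (A - S t) *ᵥ v k := by
        rw [Matrix.sub_mulVec, hveq k, sub_zero]
      rw [← hAv, h1]
      calc ‖(A - S t) *ᵥ v k‖ ≤ (∑ i, ∑ j, |(A - S t) i j|) * ‖v k‖ :=
            mulVec_norm_le' _ _
        _ = ∑ i, ∑ j, |S tstar i j - S t i j| := by
            rw [hvnorm k, mul_one]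
            simp [Matrix.sub_apply, hA]
        _ ≤ CC * ε := hSumLip t (hsIcc k)
    have hbnorm : ‖b‖ ≤ CC * ε / γ := by
      have := hgap b hb
      rw [le_div_iff₀ hγpos]
      calc ‖b‖ * γ = γ * ‖b‖ := mul_comm _ _
        _ ≤ ‖A *ᵥ b‖ := this
        _ ≤ CC * ε := hAvb
    -- quadratic form identity
    have hATsymm : Aᵀ = A := hsymm tstar htstar
    have hquad : v k ⬝ᵥ (A *ᵥ v k) = b ⬝ᵥ (A *ᵥ b) := by
      rw [hAv, ← hab, add_dotProduct]
      have hcross : a ⬝ᵥ (A *ᵥ b) = 0 := by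
        rw [Matrix.dotProduct_mulVec, ← Matrix.mulVec_transpose, hATsymm, hAa,
          zero_dotProduct]
      rw [hcross, zero_add]
    -- MVT lower bound
    have hH : ∀ τ ∈ Icc t₀ t₁,
        HasDerivWithinAt (fun τ => v k ⬝ᵥ (S τ *ᵥ v k)) (v k ⬝ᵥ (S' τ *ᵥ v k))
          (Icc t₀ t₁) τ := fun τ hτ => quad_deriv hderiv (v k) τ hτ
    have hHc : ∀ τ ∈ Icc t₀ t₁, c ≤ v k ⬝ᵥ (S' τ *ᵥ v k) :=
      fun τ hτ => hcle τ hτ (v k) (hvnorm k)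
    have hzero : v k ⬝ᵥ (S t *ᵥ v k) = 0 := by rw [hveq k, dotProduct_zero]
    have hmvt : c * ε ≤ |v k ⬝ᵥ (A *ᵥ v k)| := by
      rcases lt_or_gt_of_ne (hsne k) with hlt | hgt
      · have := mvt_lower hH hHc (hsIcc k) htstar hlt.le
        rw [hzero, sub_zero] at this
        have hεeq : ε = tstar - t := by rw [hεdef, abs_of_neg (by linarith)]; ring
        rw [hεeq]
        exact this.trans (le_abs_self _)
      · have := mvt_lower hH hHc htstar (hsIcc k) hgt.le
        rw [hzero] at this
        have hεeq : ε = t - tstar := by rw [hεdef, abs_of_pos (by linarith)]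
        rw [hεeq]
        calc c * (t - tstar) ≤ 0 - v k ⬝ᵥ (A *ᵥ v k) := this
          _ ≤ |v k ⬝ᵥ (A *ᵥ v k)| := by
              rw [zero_sub]; exact neg_le_abs _
    -- combine
    have habs : |v k ⬝ᵥ (A *ᵥ v k)| ≤ (n * CC * CC / γ) * ε ^ 2 := by
      rw [hquad]
      calc |b ⬝ᵥ (A *ᵥ b)| ≤ n * ‖b‖ * ‖A *ᵥ b‖ := abs_dot_le' _ _
        _ ≤ n * (CC * ε / γ) * (CC * ε) := by
            have hn0 : (0:ℝ) ≤ n := Nat.cast_nonneg n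
            have h1 : (0:ℝ) ≤ ‖b‖ := norm_nonneg _
            have h2 : (0:ℝ) ≤ ‖A *ᵥ b‖ := norm_nonneg _
            apply mul_le_mul
            · exact mul_le_mul_of_nonneg_left hbnorm hn0
            · exact hAvb
            · exact h2
            · positivity
        _ = (n * CC * CC / γ) * ε ^ 2 := by ring
    exact hmvt.trans habs
  -- contradiction with s k → tstar
  set K := (n : ℝ) * CC * CC / γ with hKdef
  have hKpos : 0 < K := by
    have : (0:ℝ) < n := Nat.cast_pos.mpr hn
    positivity
  have hδpos : 0 < c / K := div_pos hcpos hKpos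
  obtain ⟨k, hk⟩ := (Metric.tendsto_atTop.mp hst (c / K) hδpos) |>.imp fun k h => h k le_rfl
  rw [Real.dist_eq] at hk
  have hεpos : 0 < |s k - tstar| := abs_pos.mpr (sub_ne_zero.mpr (hsne k))
  have hkey := key k
  have : K * |s k - tstar| ^ 2 < K * ((c / K) * |s k - tstar|) := by
    apply mul_lt_mul_of_pos_left _ hKpos
    have := hεpos
    nlinarith
  have heq : K * ((c / K) * |s k - tstar|) = c * |s k - tstar| := by
    field_simp
  linarith [hkey, this, heq]
end

section
/- Let S₀ and S₁ be invertible real symmetric n×n matrices with S₁ − S₀ positive semidefinite (S₀ ≤ S₁). Then ind S₀ − ind S₁ = ind(S₀⁻¹ − S₁⁻¹), where ind S denotes the negative inertia index of the quadratic form x ↦ xᵀSx. -/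
open Matrix

/-- The negative inertia index (Morse index) of the quadratic form `x ↦ xᵀSx`:
the maximal dimension of a subspace on which the form is negative definite. -/
noncomputable def negInertiaIndex {n : ℕ} (S : Matrix (Fin n) (Fin n) ℝ) : ℕ :=
  sSup {d : ℕ | ∃ V : Submodule ℝ (Fin n → ℝ),
    Module.finrank ℝ V = d ∧ ∀ x ∈ V, x ≠ 0 → x ⬝ᵥ (S *ᵥ x) < 0}

section Aux
variable {m : Type*} [Fintype m]

noncomputable def negIdx (S : Matrix m m ℝ) : ℕ :=
  sSup {d : ℕ | ∃ V : Submodule ℝ (m → ℝ),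
    Module.finrank ℝ V = d ∧ ∀ x ∈ V, x ≠ 0 → x ⬝ᵥ (S *ᵥ x) < 0}

/-- functions supported on `s` -/
def coordSub (s : Set m) [DecidablePred (· ∈ s)] : Submodule ℝ (m → ℝ) where
  carrier := {x | ∀ j, j ∉ s → x j = 0}
  add_mem' ha hb j hj := by simp [ha j hj, hb j hj]
  zero_mem' j hj := rfl
  smul_mem' c x hx j hj := by simp [hx j hj]

noncomputable def coordSubEquiv (s : Set m) [DecidablePred (· ∈ s)] :
    coordSub s ≃ₗ[ℝ] (s → ℝ) where
  toFun x j := x.1 j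
  map_add' x y := rfl
  map_smul' c x := rfl
  invFun y := ⟨fun j => if h : j ∈ s then y ⟨j, h⟩ else 0, fun j hj => dif_neg hj⟩
  left_inv x := by
    ext j
    by_cases h : j ∈ s
    · simp [h]
    · simp [h, x.2 j h]
  right_inv y := by ext j; simp [j.2]

lemma finrank_coordSub (s : Set m) [DecidablePred (· ∈ s)] [Fintype s] :
    Module.finrank ℝ (coordSub s) = Fintype.card s := by
  rw [(coordSubEquiv s).finrank_eq]
  simp [Module.finrank_pi]

lemma negIdx_set_bddAbove (S : Matrix m m ℝ) :
    BddAbove {d : ℕ | ∃ V : Submodule ℝ (m → ℝ),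
      Module.finrank ℝ V = d ∧ ∀ x ∈ V, x ≠ 0 → x ⬝ᵥ (S *ᵥ x) < 0} := by
  refine ⟨Fintype.card m, fun d hd => ?_⟩
  obtain ⟨V, hV, -⟩ := hd
  simpa [hV] using V.finrank_le.trans_eq (by simp)

lemma negIdx_set_nonempty (S : Matrix m m ℝ) :
    Set.Nonempty {d : ℕ | ∃ V : Submodule ℝ (m → ℝ),
      Module.finrank ℝ V = d ∧ ∀ x ∈ V, x ≠ 0 → x ⬝ᵥ (S *ᵥ x) < 0} :=
  ⟨0, ⊥, by simp, fun x hx hx0 => absurd (by simpa using hx) hx0⟩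

/-- main computation device: if we have a negative subspace of dim k and a
nonneg subspace of complementary dimension, negIdx = k -/
lemma negIdx_eq_of_witness (S : Matrix m m ℝ) (k : ℕ)
    (V : Submodule ℝ (m → ℝ)) (hVk : Module.finrank ℝ V = k)
    (hVneg : ∀ x ∈ V, x ≠ 0 → x ⬝ᵥ (S *ᵥ x) < 0)
    (W : Submodule ℝ (m → ℝ)) (hWk : Module.finrank ℝ W + k = Fintype.card m)
    (hWpos : ∀ x ∈ W, 0 ≤ x ⬝ᵥ (S *ᵥ x)) :
    negIdx S = k := by
  refine IsGreatest.csSup_eq ⟨⟨V, hVk, hVneg⟩, ?_⟩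
  rintro d ⟨V', hV', hV'neg⟩
  have hdisj : V' ⊓ W = ⊥ := by
    rw [Submodule.eq_bot_iff]
    rintro x ⟨hx1, hx2⟩
    by_contra hx0
    exact absurd (hWpos x hx2) (not_le.mpr (hV'neg x hx1 hx0))
  have := Submodule.finrank_sup_add_finrank_inf_eq V' W
  rw [hdisj] at this
  simp only [finrank_bot, add_zero] at this
  have hle : Module.finrank ℝ ↥(V' ⊔ W) ≤ Fintype.card m := by
    simpa using (V' ⊔ W).finrank_le.trans_eq (by simp)
  omega

lemma diag_quad (d : m → ℝ) [DecidableEq m] (x : m → ℝ) :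
    x ⬝ᵥ (diagonal d *ᵥ x) = ∑ i, d i * (x i * x i) := by
  simp [dotProduct, mulVec_diagonal]
  congr 1; ext i; ring

lemma negIdx_diagonal (d : m → ℝ) [DecidableEq m] :
    negIdx (diagonal d) = Fintype.card {i // d i < 0} := by
  classical
  refine negIdx_eq_of_witness _ _ (coordSub {i | d i < 0}) (finrank_coordSub _) ?_
    (coordSub {i | ¬ d i < 0}) ?_ ?_
  · intro x hx hx0
    rw [diag_quad]
    obtain ⟨j, hj⟩ : ∃ j, x j ≠ 0 := Function.ne_iff.mp hx0
    have hjs : d j < 0 := by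
      by_contra h
      exact hj (hx j h)
    calc ∑ i, d i * (x i * x i) < ∑ _i : m, (0:ℝ) := by
          refine Finset.sum_lt_sum (fun i _ => ?_) ⟨j, Finset.mem_univ j, ?_⟩
          · by_cases h : d i < 0
            · exact mul_nonpos_of_nonpos_of_nonneg h.le (mul_self_nonneg _)
            · rw [hx i h]; simp
          · exact mul_neg_of_neg_of_pos hjs (mul_self_pos.mpr hj)
      _ = 0 := by simp
  · rw [finrank_coordSub]
    rw [Fintype.card_subtype, Fintype.card_subtype, ← Finset.card_union_of_disjoint
      (by simp [Finset.disjoint_filter])]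
    rw [Finset.union_comm, Finset.filter_congr (fun x _ => by simp : ∀ x ∈ Finset.univ, (x ∈ {i | ¬ d i < 0}) ↔ ¬ d x < 0), Finset.filter_union_filter_not_eq]
    simp
  · intro x hx
    rw [diag_quad]
    refine Finset.sum_nonneg fun i _ => ?_
    by_cases h : d i < 0
    · rw [hx i (by simpa using h)]; simp
    · exact mul_nonneg (not_lt.mp h) (mul_self_nonneg _)

lemma congr_quad (P S : Matrix m m ℝ) (x : m → ℝ) :
    x ⬝ᵥ ((Pᵀ * S * P) *ᵥ x) = (P *ᵥ x) ⬝ᵥ (S *ᵥ (P *ᵥ x)) := by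
  rw [← mulVec_mulVec, ← mulVec_mulVec, dotProduct_mulVec, vecMul_transpose,
    dotProduct_mulVec]

noncomputable def unitEquiv [DecidableEq m] (P : Matrix m m ℝ) (hP : IsUnit P) :
    (m → ℝ) ≃ₗ[ℝ] (m → ℝ) := by
  have hd := (Matrix.isUnit_iff_isUnit_det P).mp hP
  exact LinearEquiv.ofLinear (mulVecLin P) (mulVecLin P⁻¹)
    (by rw [← mulVecLin_mul, mul_nonsing_inv P hd, mulVecLin_one])
    (by rw [← mulVecLin_mul, nonsing_inv_mul P hd, mulVecLin_one])

lemma negIdx_le_congr [DecidableEq m] (P S : Matrix m m ℝ) (hP : IsUnit P) :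
    negIdx S ≤ negIdx (Pᵀ * S * P) := by
  refine csSup_le_csSup (negIdx_set_bddAbove _) (negIdx_set_nonempty _) ?_
  rintro d ⟨V, hV, hVneg⟩
  refine ⟨V.comap (unitEquiv P hP : (m → ℝ) →ₗ[ℝ] (m → ℝ)), ?_, ?_⟩
  · rw [Submodule.comap_equiv_eq_map_symm, LinearEquiv.finrank_map_eq, hV]
  · intro x hx hx0
    rw [congr_quad]
    refine hVneg _ hx ?_
    intro h
    apply hx0
    have : unitEquiv P hP x = 0 := h
    simpa using congrArg (unitEquiv P hP).symm this

lemma negIdx_congr [DecidableEq m] (P S : Matrix m m ℝ) (hP : IsUnit P) :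
    negIdx (Pᵀ * S * P) = negIdx S := by
  refine le_antisymm ?_ (negIdx_le_congr P S hP)
  have hd := (Matrix.isUnit_iff_isUnit_det P).mp hP
  have hP' : IsUnit P⁻¹ := by
    exact isUnit_nonsing_inv_iff.mpr hP
  have := negIdx_le_congr P⁻¹ (Pᵀ * S * P) hP'
  have he : (P⁻¹)ᵀ * (Pᵀ * S * P) * P⁻¹ = S := by
    rw [transpose_nonsing_inv]
    calc Pᵀ⁻¹ * (Pᵀ * S * P) * P⁻¹
        = (Pᵀ⁻¹ * Pᵀ) * S * (P * P⁻¹) := by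
          simp only [Matrix.mul_assoc]
      _ = S := by
          rw [nonsing_inv_mul _ (by simpa using hd), mul_nonsing_inv _ hd, one_mul, mul_one]
  rwa [he] at this

theorem exists_congr_diag [DecidableEq m] (S : Matrix m m ℝ) (hS : S.IsHermitian) :
    ∃ P : Matrix m m ℝ, IsUnit P ∧ S = Pᵀ * diagonal hS.eigenvalues * P := by
  set U : Matrix m m ℝ := (hS.eigenvectorUnitary : Matrix m m ℝ) with hU
  have h2 := (Unitary.star_mem hS.eigenvectorUnitary.2)
  refine ⟨star U, ⟨⟨star U, U, h2.2, h2.1⟩, rfl⟩, ?_⟩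
  have hT : (star U)ᵀ = U := by
    simp [Matrix.star_eq_conjTranspose, Matrix.conjTranspose]
    ext i j; simp
  rw [hT]
  have := hS.spectral_theorem
  rw [Unitary.conjStarAlgAut_apply] at this
  exact this

theorem negIdx_eq_card [DecidableEq m] (S : Matrix m m ℝ) (hS : S.IsHermitian) :
    negIdx S = Fintype.card {i // hS.eigenvalues i < 0} := by
  obtain ⟨P, hP, hdec⟩ := exists_congr_diag S hS
  conv_lhs => rw [hdec]
  rw [negIdx_congr P _ hP, negIdx_diagonal]

theorem negIdx_add_negIdx_neg [DecidableEq m] (S : Matrix m m ℝ) (hS : S.IsHermitian) :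
    negIdx S + negIdx (-S) = S.rank := by
  obtain ⟨P, hP, hdec⟩ := exists_congr_diag S hS
  have hneg : -S = Pᵀ * diagonal (-hS.eigenvalues) * P := by
    conv_lhs => rw [hdec]
    rw [show diagonal (-hS.eigenvalues) = -diagonal hS.eigenvalues by
      ext i j; by_cases h : i = j <;> simp [diagonal, h]]
    rw [Matrix.mul_neg, Matrix.neg_mul]
  rw [negIdx_eq_card S hS, hneg, negIdx_congr P _ hP, negIdx_diagonal,
    hS.rank_eq_card_non_zero_eigs]
  rw [Fintype.card_subtype, Fintype.card_subtype, Fintype.card_subtype,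
    ← Finset.card_union_of_disjoint]
  · congr 1
    ext i
    simp only [Finset.mem_union, Finset.mem_filter, Finset.mem_univ, true_and]
    constructor
    · rintro (h | h)
      · exact h.ne
      · have h' : 0 < hS.eigenvalues i := by simpa using h
        exact h'.ne'
    · intro h
      rcases h.lt_or_gt with h | h
      · exact Or.inl h
      · exact Or.inr (by simpa using h)
  · simp only [Finset.disjoint_filter]
    intro i _ h1 h2
    simp only [Pi.neg_apply, neg_lt_zero] at h2
    linarith

theorem negIdx_fromBlocks {m' : Type*} [Fintype m'] [DecidableEq m'] [DecidableEq m]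
    (A : Matrix m m ℝ) (D : Matrix m' m' ℝ) (hA : A.IsHermitian) (hD : D.IsHermitian) :
    negIdx (fromBlocks A 0 0 D) = negIdx A + negIdx D := by
  obtain ⟨P₁, hP₁, hdec₁⟩ := exists_congr_diag A hA
  obtain ⟨P₂, hP₂, hdec₂⟩ := exists_congr_diag D hD
  set a := hA.eigenvalues
  set d := hD.eigenvalues
  have key : fromBlocks A 0 0 D
      = (fromBlocks P₁ 0 0 P₂)ᵀ * diagonal (Sum.elim a d) * fromBlocks P₁ 0 0 P₂ := by
    rw [← fromBlocks_diagonal, fromBlocks_transpose, fromBlocks_multiply, fromBlocks_multiply]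
    conv_lhs => rw [hdec₁, hdec₂]
    simp
  have hPu : IsUnit (fromBlocks P₁ 0 0 P₂) := by
    rw [Matrix.isUnit_iff_isUnit_det, det_fromBlocks_zero₂₁]
    exact ((Matrix.isUnit_iff_isUnit_det P₁).mp hP₁).mul
      ((Matrix.isUnit_iff_isUnit_det P₂).mp hP₂)
  rw [key, negIdx_congr _ _ hPu, negIdx_diagonal]
  conv_rhs => rw [hdec₁, hdec₂, negIdx_congr _ _ hP₁, negIdx_congr _ _ hP₂,
    negIdx_diagonal, negIdx_diagonal]
  rw [Fintype.card_congr (Equiv.subtypeSum (p := fun c => Sum.elim a d c < 0)),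
    Fintype.card_sum]
  rfl

lemma isHermitian_of_isSymm {A : Matrix m m ℝ} (h : A.IsSymm) : A.IsHermitian := by
  rwa [Matrix.IsHermitian, conjTranspose_eq_transpose_of_trivial]

theorem main (n : ℕ) (S₀ S₁ : Matrix (Fin n) (Fin n) ℝ)
    (h₀symm : S₀.IsSymm) (h₁symm : S₁.IsSymm)
    (h₀ : IsUnit S₀) (h₁ : IsUnit S₁)
    (hle : (S₁ - S₀).PosSemidef) :
    (negIdx S₀ : ℤ) - negIdx S₁ = negIdx (S₀⁻¹ - S₁⁻¹) := by
  classical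
  have hd₀ := (Matrix.isUnit_iff_isUnit_det S₀).mp h₀
  have hd₁ := (Matrix.isUnit_iff_isUnit_det S₁).mp h₁
  have h00 : S₀ * S₀⁻¹ = 1 := mul_nonsing_inv _ hd₀
  have h00' : S₀⁻¹ * S₀ = 1 := nonsing_inv_mul _ hd₀
  have h11 : S₁ * S₁⁻¹ = 1 := mul_nonsing_inv _ hd₁
  have h11' : S₁⁻¹ * S₁ = 1 := nonsing_inv_mul _ hd₁
  have h₀is : S₀⁻¹.IsSymm := by
    rw [Matrix.IsSymm, transpose_nonsing_inv, h₀symm.eq]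
  have h₁is : S₁⁻¹.IsSymm := by
    rw [Matrix.IsSymm, transpose_nonsing_inv, h₁symm.eq]
  set M : Matrix (Fin n ⊕ Fin n) (Fin n ⊕ Fin n) ℝ := fromBlocks S₀ 1 1 S₁⁻¹ with hM
  set P₁ : Matrix (Fin n ⊕ Fin n) (Fin n ⊕ Fin n) ℝ := fromBlocks 1 (-S₀⁻¹) 0 1 with hP₁
  set P₂ : Matrix (Fin n ⊕ Fin n) (Fin n ⊕ Fin n) ℝ := fromBlocks 1 0 (-S₁) 1 with hP₂
  have hP₁u : IsUnit P₁ := by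
    rw [Matrix.isUnit_iff_isUnit_det, hP₁, det_fromBlocks_zero₂₁]
    simp
  have hP₂u : IsUnit P₂ := by
    rw [Matrix.isUnit_iff_isUnit_det, hP₂, det_fromBlocks_zero₁₂]
    simp
  have E₁ : P₁ᵀ * M * P₁ = fromBlocks S₀ 0 0 (S₁⁻¹ - S₀⁻¹) := by
    rw [hP₁, hM, fromBlocks_transpose, fromBlocks_multiply, fromBlocks_multiply]
    rw [transpose_neg, h₀is.eq]
    congr 1 <;> (simp [Matrix.mul_neg, Matrix.neg_mul, h00, h00', sub_eq_add_neg]; try abel)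
  have E₂ : P₂ᵀ * M * P₂ = fromBlocks (S₀ - S₁) 0 0 S₁⁻¹ := by
    rw [hP₂, hM, fromBlocks_transpose, fromBlocks_multiply, fromBlocks_multiply]
    rw [transpose_neg, h₁symm.eq]
    congr 1 <;> (simp [Matrix.mul_neg, Matrix.neg_mul, h11, h11', sub_eq_add_neg]; try abel)
  have hM1 : negIdx M = negIdx S₀ + negIdx (-(S₀⁻¹ - S₁⁻¹)) := by
    rw [← negIdx_congr P₁ M hP₁u, E₁, neg_sub,
      negIdx_fromBlocks _ _ (isHermitian_of_isSymm h₀symm)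
        ((isHermitian_of_isSymm h₁is).sub (isHermitian_of_isSymm h₀is))]
  have hM2 : negIdx M = negIdx (S₀ - S₁) + negIdx S₁ := by
    rw [← negIdx_congr P₂ M hP₂u, E₂,
      negIdx_fromBlocks _ _ ((isHermitian_of_isSymm h₀symm).sub
        (isHermitian_of_isSymm h₁symm)) (isHermitian_of_isSymm h₁is)]
    congr 1
    have e : (S₁⁻¹)ᵀ * S₁ * S₁⁻¹ = S₁⁻¹ := by
      rw [h₁is.eq, Matrix.mul_assoc, h11, Matrix.mul_one]
    conv_lhs => rw [← e]
    rw [negIdx_congr _ _ (isUnit_nonsing_inv_iff.mpr h₁)]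
  have hsub : (S₁ - S₀).IsHermitian :=
    (isHermitian_of_isSymm h₁symm).sub (isHermitian_of_isSymm h₀symm)
  have h4 : negIdx (S₀ - S₁) = (S₁ - S₀).rank := by
    have hz : negIdx (S₁ - S₀) = 0 := by
      rw [negIdx_eq_card _ hsub]
      rw [Fintype.card_eq_zero_iff]
      exact ⟨fun i => absurd i.2 (not_lt.mpr (hle.eigenvalues_nonneg i.1))⟩
    have := negIdx_add_negIdx_neg (S₁ - S₀) hsub
    rw [hz, zero_add, neg_sub] at this
    exact this
  have hdiffh : (S₀⁻¹ - S₁⁻¹).IsHermitian :=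
    (isHermitian_of_isSymm h₀is).sub (isHermitian_of_isSymm h₁is)
  have h5 := negIdx_add_negIdx_neg (S₀⁻¹ - S₁⁻¹) hdiffh
  have h6 : (S₀⁻¹ - S₁⁻¹).rank = (S₁ - S₀).rank := by
    have e : S₀⁻¹ - S₁⁻¹ = S₀⁻¹ * (S₁ - S₀) * S₁⁻¹ := by
      rw [Matrix.mul_sub, Matrix.sub_mul, Matrix.mul_assoc, h11, Matrix.mul_one,
        h00', Matrix.one_mul]
    have hdi₁ : IsUnit (S₁⁻¹).det := isUnit_nonsing_inv_det _ hd₁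
    have hdi₀ : IsUnit (S₀⁻¹).det := isUnit_nonsing_inv_det _ hd₀
    rw [e, rank_mul_eq_left_of_isUnit_det _ _ hdi₁,
      rank_mul_eq_right_of_isUnit_det _ _ hdi₀]
  rw [h4] at hM2
  rw [h6] at h5
  omega

end Aux

lemma negInertiaIndex_eq_negIdx {n : ℕ} (S : Matrix (Fin n) (Fin n) ℝ) :
    negInertiaIndex S = negIdx S := rfl

/-- **Index identity for comparable nondegenerate symmetric matrices.**
If `S₀ ≤ S₁` are invertible symmetric matrices, then
`ind S₀ − ind S₁ = ind (S₀⁻¹ − S₁⁻¹)`. -/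
theorem index_difference_of_inverses
    (n : ℕ) (S₀ S₁ : Matrix (Fin n) (Fin n) ℝ)
    (h₀symm : S₀.IsSymm) (h₁symm : S₁.IsSymm)
    (h₀ : IsUnit S₀) (h₁ : IsUnit S₁)
    (hle : (S₁ - S₀).PosSemidef) :
    (negInertiaIndex S₀ : ℤ) - negInertiaIndex S₁
      = negInertiaIndex (S₀⁻¹ - S₁⁻¹) := by
  rw [negInertiaIndex_eq_negIdx, negInertiaIndex_eq_negIdx, negInertiaIndex_eq_negIdx]
  exact main n S₀ S₁ h₀symm h₁symm h₀ h₁ hle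
end

section
/- Let h : ℝⁿ × ℝᵏ → ℝ be twice continuously differentiable and ū : ℝⁿ → ℝᵏ continuously differentiable such that ∂h/∂u(p, ū(p)) = 0 for every p ∈ ℝⁿ. Define H(p) = h(p, ū(p)). Then H is twice differentiable and its Hessian is Hess H(p) = h_{pp}(p, ū(p)) − (Dū(p))ᵀ · h_{uu}(p, ū(p)) · (Dū(p)), where h_{pp} and h_{uu} are the second partial derivatives of h in p and u respectively and Dū(p) is the Jacobian matrix of ū. In particular, if h is affine in p (h_{pp} = 0), then Hess H(p) = −(Dū(p))ᵀ h_{uu}(p, ū(p)) (Dū(p)). -/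
/-- **Hessian of a maximized Hamiltonian (envelope identity).**
Let `h : ℝⁿ × ℝᵏ → ℝ` be C², `ū : ℝⁿ → ℝᵏ` be C¹ with `∂h/∂u(p, ū(p)) = 0` for all `p`,
and `H(p) = h(p, ū(p))`.  Then `H` is twice differentiable and
`Hess H(p) = h_{pp}(p,ū(p)) − (Dū(p))ᵀ h_{uu}(p,ū(p)) (Dū(p))`; in particular, if
`h_{pp} = 0` then `Hess H(p) = −(Dū(p))ᵀ h_{uu}(p,ū(p)) (Dū(p))`. -/
theorem hessian_of_maximized_hamiltonian
    (n k : ℕ)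
    (h : (Fin n → ℝ) × (Fin k → ℝ) → ℝ) (hh : ContDiff ℝ 2 h)
    (u : (Fin n → ℝ) → (Fin k → ℝ)) (hu : ContDiff ℝ 1 u)
    (hcrit : ∀ (p : Fin n → ℝ) (w : Fin k → ℝ), fderiv ℝ h (p, u p) (0, w) = 0) :
    Differentiable ℝ (fun p => h (p, u p)) ∧
    Differentiable ℝ (fderiv ℝ (fun p => h (p, u p))) ∧
    (∀ (p v w : Fin n → ℝ),
      fderiv ℝ (fderiv ℝ (fun p => h (p, u p))) p v w
        = fderiv ℝ (fderiv ℝ h) (p, u p) (v, 0) (w, 0)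
          - fderiv ℝ (fderiv ℝ h) (p, u p) (0, fderiv ℝ u p v) (0, fderiv ℝ u p w)) ∧
    ((∀ (x : (Fin n → ℝ) × (Fin k → ℝ)) (v w : Fin n → ℝ),
        fderiv ℝ (fderiv ℝ h) x (v, 0) (w, 0) = 0) →
      ∀ (p v w : Fin n → ℝ),
        fderiv ℝ (fderiv ℝ (fun p => h (p, u p))) p v w
          = -fderiv ℝ (fderiv ℝ h) (p, u p) (0, fderiv ℝ u p v) (0, fderiv ℝ u p w)) := by
  classical
  have hh1 : ContDiff ℝ 1 (fderiv ℝ h) := hh.fderiv_right (by norm_num)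
  have hhd : Differentiable ℝ h := hh.differentiable (by norm_num)
  have hh1d : Differentiable ℝ (fderiv ℝ h) := hh1.differentiable (by norm_num)
  have hud : Differentiable ℝ u := hu.differentiable (by norm_num)
  have hφf : ∀ p : Fin n → ℝ, HasFDerivAt (fun p => ((p, u p) : (Fin n → ℝ) × (Fin k → ℝ)))
      ((ContinuousLinearMap.id ℝ (Fin n → ℝ)).prod (fderiv ℝ u p)) p :=
    fun p => (hasFDerivAt_id p).prodMk (hud p).hasFDerivAt
  -- first derivative of H
  have key : ∀ p : Fin n → ℝ, HasFDerivAt (fun p => h (p, u p))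
      ((fderiv ℝ h (p, u p)).comp (ContinuousLinearMap.inl ℝ (Fin n → ℝ) (Fin k → ℝ))) p := by
    intro p
    have h1 : HasFDerivAt (fun p => h (p, u p))
        ((fderiv ℝ h (p, u p)).comp
          ((ContinuousLinearMap.id ℝ (Fin n → ℝ)).prod (fderiv ℝ u p))) p :=
      ((hhd (p, u p)).hasFDerivAt).comp p (hφf p)
    convert h1 using 1
    ext w
    simp only [ContinuousLinearMap.comp_apply, ContinuousLinearMap.inl_apply,
      ContinuousLinearMap.prod_apply, ContinuousLinearMap.coe_id', id_eq]
    have hsplit : ((w, fderiv ℝ u p w) : (Fin n → ℝ) × (Fin k → ℝ))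
        = (w, 0) + (0, fderiv ℝ u p w) := by simp [Prod.ext_iff]
    rw [hsplit, map_add, hcrit, add_zero]
  have Hdiff : Differentiable ℝ (fun p => h (p, u p)) := fun p => (key p).differentiableAt
  -- the continuous linear "precompose with inl" map
  set c : (((Fin n → ℝ) × (Fin k → ℝ)) →L[ℝ] ℝ) →L[ℝ] ((Fin n → ℝ) →L[ℝ] ℝ) :=
    (ContinuousLinearMap.compL ℝ (Fin n → ℝ) ((Fin n → ℝ) × (Fin k → ℝ)) ℝ).flip
      (ContinuousLinearMap.inl ℝ (Fin n → ℝ) (Fin k → ℝ)) with hc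
  have hfe : fderiv ℝ (fun p => h (p, u p)) = fun p => c (fderiv ℝ h (p, u p)) := by
    funext p; rw [(key p).fderiv]; rfl
  -- second derivative of H
  have key2 : ∀ p : Fin n → ℝ, HasFDerivAt (fderiv ℝ (fun p => h (p, u p)))
      (c.comp ((fderiv ℝ (fderiv ℝ h) (p, u p)).comp
        ((ContinuousLinearMap.id ℝ (Fin n → ℝ)).prod (fderiv ℝ u p)))) p := by
    intro p
    rw [hfe]
    have h2 : HasFDerivAt (fun p => fderiv ℝ h (p, u p))
        ((fderiv ℝ (fderiv ℝ h) (p, u p)).comp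
          ((ContinuousLinearMap.id ℝ (Fin n → ℝ)).prod (fderiv ℝ u p))) p :=
      ((hh1d (p, u p)).hasFDerivAt).comp p (hφf p)
    exact c.hasFDerivAt.comp p h2
  have H2diff : Differentiable ℝ (fderiv ℝ (fun p => h (p, u p))) :=
    fun p => (key2 p).differentiableAt
  -- evaluate second derivative of H
  have H2eval : ∀ p v w : Fin n → ℝ, fderiv ℝ (fderiv ℝ (fun p => h (p, u p))) p v w
      = fderiv ℝ (fderiv ℝ h) (p, u p) (v, fderiv ℝ u p v) (w, 0) := by
    intro p v w
    rw [(key2 p).fderiv]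
    rfl
  -- differentiated criticality
  have dcrit : ∀ (p v : Fin n → ℝ) (w' : Fin k → ℝ),
      fderiv ℝ (fderiv ℝ h) (p, u p) (v, fderiv ℝ u p v) (0, w') = 0 := by
    intro p v w'
    set a : (((Fin n → ℝ) × (Fin k → ℝ)) →L[ℝ] ℝ) →L[ℝ] ℝ :=
      ContinuousLinearMap.apply ℝ ℝ ((0, w') : (Fin n → ℝ) × (Fin k → ℝ)) with ha
    have hg : HasFDerivAt (fun p => fderiv ℝ h (p, u p) (0, w'))
        (a.comp ((fderiv ℝ (fderiv ℝ h) (p, u p)).comp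
          ((ContinuousLinearMap.id ℝ (Fin n → ℝ)).prod (fderiv ℝ u p)))) p := by
      have h2 : HasFDerivAt (fun p => fderiv ℝ h (p, u p))
          ((fderiv ℝ (fderiv ℝ h) (p, u p)).comp
            ((ContinuousLinearMap.id ℝ (Fin n → ℝ)).prod (fderiv ℝ u p))) p :=
        ((hh1d (p, u p)).hasFDerivAt).comp p (hφf p)
      exact a.hasFDerivAt.comp p h2
    have hzero : (fun p : Fin n → ℝ => fderiv ℝ h (p, u p) (0, w')) = fun _ => (0 : ℝ) := by
      funext q; exact hcrit q w'
    rw [hzero] at hg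
    have hz := hg.fderiv
    rw [fderiv_fun_const] at hz
    have hv := congrArg (fun L => L v) hz.symm
    simpa [ha] using hv
  -- symmetry of the second derivative
  have hsymm : ∀ (x a b : (Fin n → ℝ) × (Fin k → ℝ)),
      fderiv ℝ (fderiv ℝ h) x a b = fderiv ℝ (fderiv ℝ h) x b a :=
    fun x a b => (hh.contDiffAt.isSymmSndFDerivAt (by norm_num)) a b
  -- main identity
  have main : ∀ p v w : Fin n → ℝ, fderiv ℝ (fderiv ℝ (fun p => h (p, u p))) p v w
      = fderiv ℝ (fderiv ℝ h) (p, u p) (v, 0) (w, 0)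
        - fderiv ℝ (fderiv ℝ h) (p, u p) (0, fderiv ℝ u p v) (0, fderiv ℝ u p w) := by
    intro p v w
    have e1 : ((v, fderiv ℝ u p v) : (Fin n → ℝ) × (Fin k → ℝ))
        = (v, 0) + (0, fderiv ℝ u p v) := by simp [Prod.ext_iff]
    have e2 : ((w, fderiv ℝ u p w) : (Fin n → ℝ) × (Fin k → ℝ))
        = (w, 0) + (0, fderiv ℝ u p w) := by simp [Prod.ext_iff]
    have step1 : fderiv ℝ (fderiv ℝ h) (p, u p) (0, fderiv ℝ u p v) (w, 0)
        = - fderiv ℝ (fderiv ℝ h) (p, u p) (0, fderiv ℝ u p v) (0, fderiv ℝ u p w) := by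
      have h1 : fderiv ℝ (fderiv ℝ h) (p, u p) (w, fderiv ℝ u p w) (0, fderiv ℝ u p v) = 0 :=
        dcrit p w _
      rw [e2, map_add] at h1
      simp only [ContinuousLinearMap.add_apply] at h1
      have h2 : fderiv ℝ (fderiv ℝ h) (p, u p) (w, 0) (0, fderiv ℝ u p v)
          = - fderiv ℝ (fderiv ℝ h) (p, u p) (0, fderiv ℝ u p w) (0, fderiv ℝ u p v) := by
        linarith
      rw [hsymm (p, u p) ((0, fderiv ℝ u p v)) ((w, 0)), h2,
        hsymm (p, u p) ((0, fderiv ℝ u p w)) ((0, fderiv ℝ u p v))]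
    rw [H2eval p v w, e1, map_add]
    simp only [ContinuousLinearMap.add_apply]
    rw [step1]
    ring
  refine ⟨Hdiff, H2diff, main, fun hpp p v w => ?_⟩
  rw [main p v w, hpp (p, u p) v w]
  ring
end
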